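/- arXiv:1608.05067 — 2 statements merged into one kernel-verified Lean document; each statement's English description precedes it below -/
import Mathlib

section
/- Let N ≥ 1, m > 0, ω ≥ 0 and α ∈ ℝ. Let Ω := (ℝ²)^N ∖ △△ be the complement of the fat diagonal, and suppose ψ : (ℝ²)^N → ℂ is smooth on Ω and satisfies the generalized eigenvalue equation Σ_{j=1}^N (1/(2m)) D_j² ψ(x) + (mω²/2) (Σ_{j=1}^N |x_j|²) ψ(x) = E ψ(x) pointwise on Ω for some real constant E. Then for every real-valued smooth function Φ with compact support contained in Ω, setting Ψ := Φψ, one has the identity ∫_{(ℝ²)^N} ( (1/(2m)) Σ_{j=1}^N |D_j Ψ|² + (mω²/2) Σ_{j=1}^N |x_j|² |Ψ|² ) dx = E ∫_{(ℝ²)^N} |Ψ|² dx + (1/(2m)) ∫_{(ℝ²)^N} Σ_{j=1}^N |∇_{x_j} Φ|² |ψ|² dx. -/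
open MeasureTheory Finset
open scoped BigOperators ComplexConjugate

noncomputable section

/-- Configuration space of `N` particles in the plane. -/
abbrev Conf (N : ℕ) := Fin N → Fin 2 → ℝ

/-- Euclidean norm of a planar vector. -/
def nrm (v : Fin 2 → ℝ) : ℝ := Real.sqrt (v 0 ^ 2 + v 1 ^ 2)

/-- Counterclockwise 90°-rotation `x^⊥ = (-x₂, x₁)`. -/
def perp (v : Fin 2 → ℝ) : Fin 2 → ℝ := ![-(v 1), v 0]

/-- Complex coordinate `z = x₁ + i x₂` of a planar point. -/
def zC (v : Fin 2 → ℝ) : ℂ := (v 0 : ℂ) + (v 1 : ℂ) * Complex.I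

/-- Standard basis vector labelled `(j,i)` of the configuration space. -/
def evec {N : ℕ} (j : Fin N) (i : Fin 2) : Conf N :=
  fun j' i' => if j' = j ∧ i' = i then 1 else 0

/-- Partial derivative in the variable `(j,i)` of a complex-valued function. -/
def pd {N : ℕ} (j : Fin N) (i : Fin 2) (f : Conf N → ℂ) (x : Conf N) : ℂ :=
  fderiv ℝ f x (evec j i)

/-- Partial derivative in the variable `(j,i)` of a real-valued function. -/
def pdR {N : ℕ} (j : Fin N) (i : Fin 2) (f : Conf N → ℝ) (x : Conf N) : ℝ :=
  fderiv ℝ f x (evec j i)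

/-- Ideal anyon magnetic potential `A_j(x) = Σ_{k≠j} (x_j - x_k)^{-⊥}`. -/
def Avec {N : ℕ} (j : Fin N) (x : Conf N) : Fin 2 → ℝ :=
  ∑ k ∈ univ.filter (fun k => k ≠ j), (1 / nrm (x j - x k) ^ 2) • perp (x j - x k)

/-- Component `i` of the magnetically coupled momentum `D_j = -i∇_j + αA_j`. -/
def Dop {N : ℕ} (α : ℝ) (j : Fin N) (i : Fin 2) (f : Conf N → ℂ) (x : Conf N) : ℂ :=
  (-Complex.I) * pd j i f x + ((α * Avec j x i : ℝ) : ℂ) * f x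

/-- The magnetic Laplacian `D_j² = D_j · D_j`. -/
def D2 {N : ℕ} (α : ℝ) (j : Fin N) (f : Conf N → ℂ) (x : Conf N) : ℂ :=
  ∑ i : Fin 2, Dop α j i (fun y => Dop α j i f y) x

/-- The fat diagonal of the configuration space. -/
def fatDiag (N : ℕ) : Set (Conf N) := {x | ∃ j k, j ≠ k ∧ x j = x k}


namespace Anyon

open Pointwise

variable {N : ℕ}

/-- integration by parts: integral of a partial derivative of a compactly
supported C¹ function vanishes. -/
lemma integral_pd_eq_zero (f : Conf N → ℂ) (hf : ContDiff ℝ 1 f)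
    (hc : HasCompactSupport f) (j : Fin N) (i : Fin 2) :
    ∫ x : Conf N, pd j i f x = 0 := by
  show ∫ x : Conf N, fderiv ℝ f x (evec j i) = 0
  set v := evec j i
  obtain ⟨C, hC⟩ := (hc.fderiv ℝ).exists_bound_of_continuous (hf.continuous_fderiv one_ne_zero)
  have hC0 : 0 ≤ C := le_trans (norm_nonneg _) (hC 0)
  set K : Set (Conf N) := tsupport f + Metric.closedBall (0 : Conf N) ‖v‖ with hK
  have hKc : IsCompact K := IsCompact.add hc (isCompact_closedBall _ _)
  have key := hasDerivAt_integral_of_dominated_loc_of_deriv_le (μ := volume)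
      (F := fun t x => f (x + t • v)) (F' := fun t x => fderiv ℝ f (x + t • v) v)
      (x₀ := (0:ℝ)) (bound := K.indicator fun _ => C * ‖v‖) (s := Metric.ball (0:ℝ) 1) (Metric.ball_mem_nhds _ one_pos)
      ?_ ?_ ?_ ?_ ?_ ?_
  · have hconst : (fun t : ℝ => ∫ x : Conf N, f (x + t • v)) = fun _ => ∫ x : Conf N, f x := by
      funext t; exact integral_add_right_eq_self f (t • v)
    have h2 := key.2
    rw [hconst] at h2
    simpa using h2.unique (hasDerivAt_const 0 _)
  · filter_upwards with t
    exact (hf.continuous.comp (by fun_prop)).aestronglyMeasurable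
  · simpa using (hf.continuous.integrable_of_hasCompactSupport hc)
  · exact ((hf.continuous_fderiv one_ne_zero).clm_apply continuous_const).comp
      (by fun_prop : Continuous fun x : Conf N => x + (0:ℝ) • v) |>.aestronglyMeasurable
  · filter_upwards with x
    intro t ht
    by_cases hx : x ∈ K
    · calc ‖fderiv ℝ f (x + t • v) v‖ ≤ ‖fderiv ℝ f (x + t • v)‖ * ‖v‖ :=
            (fderiv ℝ f (x + t • v)).le_opNorm v
        _ ≤ C * ‖v‖ := by gcongr; exact hC _
        _ = K.indicator (fun _ => C * ‖v‖) x := by rw [Set.indicator_of_mem hx]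
    · have hxt : x + t • v ∉ tsupport f := by
        intro hmem
        apply hx
        rw [hK]
        refine Set.mem_add.2 ⟨x + t • v, hmem, -(t • v), ?_, by abel⟩
        simp only [Metric.mem_closedBall, dist_zero_right, norm_neg, norm_smul]
        calc |t| * ‖v‖ ≤ 1 * ‖v‖ := by
              gcongr
              exact le_of_lt (by simpa [Real.norm_eq_abs] using Metric.mem_ball.1 ht)
          _ = ‖v‖ := one_mul _
      have : fderiv ℝ f (x + t • v) = 0 := by
        by_contra h
        exact hxt (support_fderiv_subset ℝ (Function.mem_support.2 h))
      rw [this, Set.indicator_of_notMem hx]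
      simp
  · refine (IntegrableOn.integrable_indicator ?_ hKc.isClosed.measurableSet)
    exact integrableOn_const hKc.measure_lt_top.ne
  · filter_upwards with x
    intro t ht
    have h1 : HasFDerivAt f (fderiv ℝ f (x + t • v)) (x + t • v) :=
      (hf.differentiable one_ne_zero _).hasFDerivAt
    have h2 : HasDerivAt (fun s : ℝ => x + s • v) v t := by
      simpa using ((hasDerivAt_id t).smul_const v).const_add x
    exact h1.comp_hasDerivAt t h2

lemma isClosed_fatDiag : IsClosed (fatDiag N) := by
  have h : fatDiag N = ⋃ j, ⋃ k, {x : Conf N | j ≠ k ∧ x j = x k} := by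
    ext x; simp [fatDiag]
  rw [h]
  refine isClosed_iUnion_of_finite fun j => isClosed_iUnion_of_finite fun k => ?_
  by_cases h : j = k
  · convert isClosed_empty
    ext x; simp [h]
  · have h2 : {x : Conf N | j ≠ k ∧ x j = x k} = {x : Conf N | x j = x k} := by
      ext x; simp [h]
    rw [h2]
    exact isClosed_eq (continuous_apply j) (continuous_apply k)

lemma isOpen_compl_fatDiag : IsOpen (fatDiag N)ᶜ := isClosed_fatDiag.isOpen_compl

/-! ### pd calculus -/

lemma pd_congr {j : Fin N} {i} {f g : Conf N → ℂ} {x} (h : f =ᶠ[nhds x] g) :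
    pd j i f x = pd j i g x := by rw [pd, pd, h.fderiv_eq]

lemma pd_of_eventually_zero {j : Fin N} {i} {f : Conf N → ℂ} {x} (h : f =ᶠ[nhds x] 0) :
    pd j i f x = 0 := by
  have h' : f =ᶠ[nhds x] fun _ => (0:ℂ) := h
  rw [pd, h'.fderiv_eq, fderiv_fun_const]; rfl

lemma pdR_of_eventually_zero {j : Fin N} {i} {f : Conf N → ℝ} {x} (h : f =ᶠ[nhds x] 0) :
    pdR j i f x = 0 := by
  have h' : f =ᶠ[nhds x] fun _ => (0:ℝ) := h
  rw [pdR, h'.fderiv_eq, fderiv_fun_const]; rfl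

lemma pd_add {j : Fin N} {i} {f g : Conf N → ℂ} {x} (hf : DifferentiableAt ℝ f x)
    (hg : DifferentiableAt ℝ g x) :
    pd j i (fun y => f y + g y) x = pd j i f x + pd j i g x := by
  simp [pd, fderiv_fun_add hf hg]

lemma pd_const_mul {j : Fin N} {i} (c : ℂ) {f : Conf N → ℂ} {x}
    (hf : DifferentiableAt ℝ f x) :
    pd j i (fun y => c * f y) x = c * pd j i f x := by
  simp [pd, fderiv_const_mul hf c]

lemma pd_mul {j : Fin N} {i} {f g : Conf N → ℂ} {x} (hf : DifferentiableAt ℝ f x)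
    (hg : DifferentiableAt ℝ g x) :
    pd j i (fun y => f y * g y) x = pd j i f x * g x + f x * pd j i g x := by
  simp only [pd, fderiv_fun_mul hf hg, ContinuousLinearMap.add_apply,
    ContinuousLinearMap.smul_apply, smul_eq_mul]
  ring

lemma pd_conj {j : Fin N} {i} {f : Conf N → ℂ} {x} :
    pd j i (fun y => conj (f y)) x = conj (pd j i f x) := by
  have h3 : fderiv ℝ (fun y => conj (f y)) x
      = (Complex.conjCLE : ℂ →L[ℝ] ℂ).comp (fderiv ℝ f x) := by
    rw [← Complex.conjCLE.comp_fderiv (f := f)]; rfl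
  rw [pd, h3, pd]; rfl

lemma pd_ofReal {j : Fin N} {i} {φ : Conf N → ℝ} {x} (hφ : DifferentiableAt ℝ φ x) :
    pd j i (fun y => ((φ y : ℝ) : ℂ)) x = ((pdR j i φ x : ℝ) : ℂ) := by
  have h3 : fderiv ℝ (fun y => ((φ y : ℝ) : ℂ)) x = Complex.ofRealCLM.comp (fderiv ℝ φ x) :=
    (Complex.ofRealCLM.hasFDerivAt.comp x hφ.hasFDerivAt).fderiv
  rw [pd, h3]; rfl

lemma pdR_mul {j : Fin N} {i} {f g : Conf N → ℝ} {x} (hf : DifferentiableAt ℝ f x)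
    (hg : DifferentiableAt ℝ g x) :
    pdR j i (fun y => f y * g y) x = pdR j i f x * g x + f x * pdR j i g x := by
  simp only [pdR, fderiv_fun_mul hf hg, ContinuousLinearMap.add_apply,
    ContinuousLinearMap.smul_apply, smul_eq_mul]
  ring

/-! ### smoothness -/

lemma contDiff_coord (j : Fin N) (i : Fin 2) : ContDiff ℝ (⊤ : ℕ∞) (fun x : Conf N => x j i) := by
  have : (fun x : Conf N => x j i)
      = (ContinuousLinearMap.proj (R := ℝ) (φ := fun _ : Fin 2 => ℝ) i).comp
        (ContinuousLinearMap.proj (R := ℝ) (φ := fun _ : Fin N => (Fin 2 → ℝ)) j) := rfl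
  rw [this]
  exact ContinuousLinearMap.contDiff _

lemma nrm_sq (v : Fin 2 → ℝ) : nrm v ^ 2 = v 0 ^ 2 + v 1 ^ 2 :=
  Real.sq_sqrt (by positivity)

lemma contDiffOn_Avec (j : Fin N) (i : Fin 2) :
    ContDiffOn ℝ (⊤ : ℕ∞) (fun x => Avec j x i) (fatDiag N)ᶜ := by
  have hrw : (fun x : Conf N => Avec j x i) = fun x =>
      ∑ k ∈ univ.filter (fun k => k ≠ j),
        (1 / ((x j 0 - x k 0) ^ 2 + (x j 1 - x k 1) ^ 2)) * perp (x j - x k) i := by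
    funext x
    rw [Avec, Finset.sum_apply]
    refine Finset.sum_congr rfl fun k _ => ?_
    rw [Pi.smul_apply, smul_eq_mul, nrm_sq]
    simp [Pi.sub_apply]
  rw [hrw]
  apply ContDiffOn.sum
  intro k hk
  have hkj : k ≠ j := by simpa using (Finset.mem_filter.1 hk).2
  have hq : ContDiff ℝ (⊤ : ℕ∞) (fun x : Conf N => (x j 0 - x k 0) ^ 2 + (x j 1 - x k 1) ^ 2) :=
    (((contDiff_coord j 0).sub (contDiff_coord k 0)).pow 2).add
      (((contDiff_coord j 1).sub (contDiff_coord k 1)).pow 2)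
  have hden : ∀ x ∈ (fatDiag N)ᶜ, (x j 0 - x k 0) ^ 2 + (x j 1 - x k 1) ^ 2 ≠ 0 := by
    intro x hx h0
    apply hx
    refine ⟨j, k, Ne.symm hkj, ?_⟩
    funext i'
    have h1 : x j 0 - x k 0 = 0 := by nlinarith [sq_nonneg (x j 0 - x k 0), sq_nonneg (x j 1 - x k 1)]
    have h2 : x j 1 - x k 1 = 0 := by nlinarith [sq_nonneg (x j 0 - x k 0), sq_nonneg (x j 1 - x k 1)]
    fin_cases i'
    · show x j 0 = x k 0; linarith
    · show x j 1 = x k 1; linarith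
  have hperp : ContDiff ℝ (⊤ : ℕ∞) (fun x : Conf N => perp (x j - x k) i) := by
    have h0 : ∀ x : Conf N, (x j - x k) 0 = x j 0 - x k 0 := fun x => rfl
    have h1 : ∀ x : Conf N, (x j - x k) 1 = x j 1 - x k 1 := fun x => rfl
    fin_cases i
    · simp only [perp, Matrix.cons_val_zero, h1]
      exact ((contDiff_coord j 1).sub (contDiff_coord k 1)).neg
    · simp only [perp, Matrix.cons_val_one, Matrix.head_cons, h0]
      exact (contDiff_coord j 0).sub (contDiff_coord k 0)
  exact (ContDiffOn.div contDiffOn_const hq.contDiffOn hden).mul hperp.contDiffOn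

/-! ### gluing -/

lemma contDiff_glue {E : Type*} [NormedAddCommGroup E] [NormedSpace ℝ E] {Φ : Conf N → ℝ}
    (hsupp : tsupport Φ ⊆ (fatDiag N)ᶜ) {f : Conf N → E}
    (h1 : ContDiffOn ℝ (⊤ : ℕ∞) f (fatDiag N)ᶜ)
    (h2 : ∀ x ∉ tsupport Φ, f x = 0) : ContDiff ℝ (⊤ : ℕ∞) f := by
  rw [contDiff_iff_contDiffAt]
  intro x
  by_cases hx : x ∈ (fatDiag N)ᶜ
  · exact h1.contDiffAt (isOpen_compl_fatDiag.mem_nhds hx)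
  · have hxs : x ∉ tsupport Φ := fun h => hx (hsupp h)
    have hop : IsOpen (tsupport Φ)ᶜ := (isClosed_tsupport Φ).isOpen_compl
    have hev : f =ᶠ[nhds x] fun _ => 0 :=
      Filter.eventually_of_mem (hop.mem_nhds hxs) fun y hy => h2 y hy
    exact (contDiffAt_const (c := (0:E))).congr_of_eventuallyEq hev

lemma continuous_glue {E : Type*} [NormedAddCommGroup E] [NormedSpace ℝ E] {Φ : Conf N → ℝ}
    (hsupp : tsupport Φ ⊆ (fatDiag N)ᶜ) {f : Conf N → E}
    (h1 : ContinuousOn f (fatDiag N)ᶜ)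
    (h2 : ∀ x ∉ tsupport Φ, f x = 0) : Continuous f := by
  rw [continuous_iff_continuousAt]
  intro x
  by_cases hx : x ∈ (fatDiag N)ᶜ
  · exact h1.continuousAt (isOpen_compl_fatDiag.mem_nhds hx)
  · have hxs : x ∉ tsupport Φ := fun h => hx (hsupp h)
    have hop : IsOpen (tsupport Φ)ᶜ := (isClosed_tsupport Φ).isOpen_compl
    have hev : (fun _ => (0:E)) =ᶠ[nhds x] f :=
      Filter.eventually_of_mem (hop.mem_nhds hxs) fun y hy => (h2 y hy).symm
    exact ContinuousAt.congr continuousAt_const hev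

lemma integrable_glue {E : Type*} [NormedAddCommGroup E] [NormedSpace ℝ E] {Φ : Conf N → ℝ}
    (hcpt : HasCompactSupport Φ)
    (hsupp : tsupport Φ ⊆ (fatDiag N)ᶜ) {f : Conf N → E}
    (h1 : ContinuousOn f (fatDiag N)ᶜ)
    (h2 : ∀ x ∉ tsupport Φ, f x = 0) : Integrable f :=
  (continuous_glue hsupp h1 h2).integrable_of_hasCompactSupport
    (HasCompactSupport.intro hcpt h2)

end Anyon

/-- If `ψ` is smooth on the complement of the fat diagonal and is a
generalized eigenfunction of the `N`-anyon harmonic oscillator Hamiltonian there with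
eigenvalue `E`, then for every real smooth `Φ` compactly supported away from the
diagonals, the energy of `Ψ = Φψ` is `E‖Ψ‖² + (1/2m)∫ |∇Φ|²|ψ|²`. -/
theorem statement0 (N : ℕ) (hN : 1 ≤ N) (m ω α E : ℝ) (hm : 0 < m) (hω : 0 ≤ ω)
    (ψ : Conf N → ℂ)
    (hψ : ContDiffOn ℝ (⊤ : ℕ∞) ψ (fatDiag N)ᶜ)
    (heig : ∀ x ∈ (fatDiag N)ᶜ,
      ∑ j, ((1 / (2 * m) : ℝ) : ℂ) * D2 α j ψ x
        + (((m * ω ^ 2 / 2) * ∑ j, nrm (x j) ^ 2 : ℝ) : ℂ) * ψ x = (E : ℂ) * ψ x)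
    (Φ : Conf N → ℝ) (hΦ : ContDiff ℝ (⊤ : ℕ∞) Φ) (hcpt : HasCompactSupport Φ)
    (hsupp : tsupport Φ ⊆ (fatDiag N)ᶜ) :
    ∫ x : Conf N,
        ((1 / (2 * m)) * ∑ j, ∑ i, ‖Dop α j i (fun y => (Φ y : ℂ) * ψ y) x‖ ^ 2
          + (m * ω ^ 2 / 2) * (∑ j, nrm (x j) ^ 2) * ‖(Φ x : ℂ) * ψ x‖ ^ 2)
      = E * (∫ x : Conf N, ‖(Φ x : ℂ) * ψ x‖ ^ 2)
        + (1 / (2 * m)) *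
          ∫ x : Conf N, (∑ j, ∑ i, (pdR j i Φ x) ^ 2) * ‖ψ x‖ ^ 2 := by
  classical
  have hopU : IsOpen (fatDiag N)ᶜ := Anyon.isOpen_compl_fatDiag
  have hopT : IsOpen (tsupport Φ)ᶜ := (isClosed_tsupport Φ).isOpen_compl
  have hΦ0 : ∀ x ∉ tsupport Φ, Φ x = 0 := fun x hx => image_eq_zero_of_notMem_tsupport hx
  have hΦev : ∀ x ∉ tsupport Φ, Φ =ᶠ[nhds x] 0 := fun x hx =>
    notMem_tsupport_iff_eventuallyEq.1 hx
  have hTU : ∀ x, x ∉ (fatDiag N)ᶜ → x ∉ tsupport Φ := fun x hx h => hx (hsupp h)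
  set Ψ : Conf N → ℂ := fun y => (Φ y : ℂ) * ψ y with hΨdef
  -- differentiability helpers
  have hdiffG : ∀ {f : Conf N → ℂ}, ContDiff ℝ (⊤ : ℕ∞) f → ∀ x, DifferentiableAt ℝ f x :=
    fun hf x => (hf.differentiable (by simp)).differentiableAt
  have hdiffU : ∀ {f : Conf N → ℂ}, ContDiffOn ℝ (⊤ : ℕ∞) f (fatDiag N)ᶜ →
      ∀ x ∈ (fatDiag N)ᶜ, DifferentiableAt ℝ f x :=
    fun hf x hx => (hf.differentiableOn (by simp)).differentiableAt (hopU.mem_nhds hx)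
  have hdiffRG : ∀ {f : Conf N → ℝ}, ContDiff ℝ (⊤ : ℕ∞) f → ∀ x, DifferentiableAt ℝ f x :=
    fun hf x => (hf.differentiable (by simp)).differentiableAt
  have hdiffC : ∀ {f : Conf N → ℝ} {x}, DifferentiableAt ℝ f x →
      DifferentiableAt ℝ (fun y => ((f y : ℝ) : ℂ)) x :=
    fun {f x} hf => (Complex.ofRealCLM.hasFDerivAt.comp x hf.hasFDerivAt).differentiableAt
  -- smoothness
  have hΦ' : ∀ (j : Fin N) (i : Fin 2), ContDiff ℝ (⊤ : ℕ∞) (fun x => pdR j i Φ x) :=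
    fun j i => (hΦ.fderiv_right (by simp)).clm_apply contDiff_const
  have hΦC : ContDiff ℝ (⊤ : ℕ∞) (fun x : Conf N => ((Φ x : ℝ) : ℂ)) :=
    Complex.ofRealCLM.contDiff.comp hΦ
  have haC : ∀ (j : Fin N) (i : Fin 2),
      ContDiffOn ℝ (⊤ : ℕ∞) (fun x => ((α * Avec j x i : ℝ) : ℂ)) (fatDiag N)ᶜ :=
    fun j i => Complex.ofRealCLM.contDiff.comp_contDiffOn
      (contDiffOn_const.mul (Anyon.contDiffOn_Avec j i))
  have hpdU : ∀ {f : Conf N → ℂ}, ContDiffOn ℝ (⊤ : ℕ∞) f (fatDiag N)ᶜ → ∀ (j : Fin N) (i : Fin 2),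
      ContDiffOn ℝ (⊤ : ℕ∞) (fun x => pd j i f x) (fatDiag N)ᶜ :=
    fun hf j i => (hf.fderiv_of_isOpen hopU (by simp)).clm_apply contDiffOn_const
  have hDopU : ∀ {f : Conf N → ℂ}, ContDiffOn ℝ (⊤ : ℕ∞) f (fatDiag N)ᶜ → ∀ (j : Fin N) (i : Fin 2),
      ContDiffOn ℝ (⊤ : ℕ∞) (fun x => Dop α j i f x) (fatDiag N)ᶜ :=
    fun {f} hf j i => (contDiffOn_const.mul (hpdU hf j i)).add ((haC j i).mul hf)
  have hDψU : ∀ (j : Fin N) (i : Fin 2),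
      ContDiffOn ℝ (⊤ : ℕ∞) (fun x => Dop α j i ψ x) (fatDiag N)ᶜ := fun j i => hDopU hψ j i
  have hΨU : ContDiffOn ℝ (⊤ : ℕ∞) Ψ (fatDiag N)ᶜ := hΦC.contDiffOn.mul hψ
  have hΨ0 : ∀ x ∉ tsupport Φ, Ψ x = 0 := fun x hx => by
    rw [hΨdef]; simp [hΦ0 x hx]
  have hΨs : ContDiff ℝ (⊤ : ℕ∞) Ψ := Anyon.contDiff_glue hsupp hΨU hΨ0
  have hΨcpt : HasCompactSupport Ψ := HasCompactSupport.intro hcpt hΨ0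
  have hconjΨ : ContDiff ℝ (⊤ : ℕ∞) (fun x => conj (Ψ x)) :=
    (Complex.conjCLE : ℂ →L[ℝ] ℂ).contDiff.comp hΨs
  have hconjψU : ContDiffOn ℝ (⊤ : ℕ∞) (fun x => conj (ψ x)) (fatDiag N)ᶜ :=
    (Complex.conjCLE : ℂ →L[ℝ] ℂ).contDiff.comp_contDiffOn hψ
  -- vanishing of Dop off the support
  have hDop0 : ∀ (j : Fin N) (i : Fin 2) (f : Conf N → ℂ), (∀ x ∉ tsupport Φ, f x = 0) →
      ∀ x ∉ tsupport Φ, Dop α j i f x = 0 := by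
    intro j i f hf x hx
    have hev : f =ᶠ[nhds x] 0 :=
      Filter.eventually_of_mem (hopT.mem_nhds hx) fun y hy => hf y hy
    unfold Dop
    rw [Anyon.pd_of_eventually_zero hev, hf x hx]
    ring
  have hDΨ0 : ∀ (j : Fin N) (i : Fin 2), ∀ x ∉ tsupport Φ, Dop α j i Ψ x = 0 :=
    fun j i => hDop0 j i Ψ hΨ0
  have hDΨs : ∀ (j : Fin N) (i : Fin 2), ContDiff ℝ (⊤ : ℕ∞) (fun x => Dop α j i Ψ x) :=
    fun j i => Anyon.contDiff_glue hsupp (hDopU hΨU j i) (hDΨ0 j i)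
  have hDDΨ0 : ∀ (j : Fin N) (i : Fin 2), ∀ x ∉ tsupport Φ,
      Dop α j i (fun y => Dop α j i Ψ y) x = 0 :=
    fun j i => hDop0 j i _ (hDΨ0 j i)
  have hDDΨs : ∀ (j : Fin N) (i : Fin 2),
      ContDiff ℝ (⊤ : ℕ∞) (fun x => Dop α j i (fun y => Dop α j i Ψ y) x) :=
    fun j i => Anyon.contDiff_glue hsupp (hDopU (hDopU hΨU j i) j i) (hDDΨ0 j i)
  -- Dop algebra
  have Dop_congr : ∀ (j : Fin N) (i : Fin 2) {f g : Conf N → ℂ} (x : Conf N),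
      f =ᶠ[nhds x] g → Dop α j i f x = Dop α j i g x := by
    intro j i f g x h
    unfold Dop
    rw [Anyon.pd_congr h, h.self_of_nhds]
  have Dop_mulΦ : ∀ (j : Fin N) (i : Fin 2) (φr : Conf N → ℝ) (g : Conf N → ℂ) (x : Conf N),
      DifferentiableAt ℝ φr x → DifferentiableAt ℝ g x →
      Dop α j i (fun y => (φr y : ℂ) * g y) x
        = (φr x : ℂ) * Dop α j i g x + (-Complex.I) * ((pdR j i φr x : ℝ) : ℂ) * g x := by
    intro j i φr g x hφr hg
    unfold Dop
    rw [Anyon.pd_mul (hdiffC hφr) hg, Anyon.pd_ofReal hφr]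
    ring
  have Dop_add : ∀ (j : Fin N) (i : Fin 2) {f g : Conf N → ℂ} (x : Conf N),
      DifferentiableAt ℝ f x → DifferentiableAt ℝ g x →
      Dop α j i (fun y => f y + g y) x = Dop α j i f x + Dop α j i g x := by
    intro j i f g x hf hg
    unfold Dop
    rw [Anyon.pd_add hf hg]
    ring
  have Dop_cmul : ∀ (j : Fin N) (i : Fin 2) (c : ℂ) {f : Conf N → ℂ} (x : Conf N),
      DifferentiableAt ℝ f x →
      Dop α j i (fun y => c * f y) x = c * Dop α j i f x := by
    intro j i c f x hf
    unfold Dop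
    rw [Anyon.pd_const_mul c hf]
    ring
  -- first-order IMS formula on U
  have hb1 : ∀ (j : Fin N) (i : Fin 2), ∀ x ∈ (fatDiag N)ᶜ,
      Dop α j i Ψ x = (Φ x : ℂ) * Dop α j i ψ x
        + (-Complex.I) * (((pdR j i Φ x : ℝ) : ℂ) * ψ x) := by
    intro j i x hx
    have h1 : Dop α j i Ψ x = Dop α j i (fun y => (Φ y : ℂ) * ψ y) x := by rw [hΨdef]
    rw [h1, Dop_mulΦ j i Φ ψ x (hdiffRG hΦ x) (hdiffU hψ x hx)]
    ring
  -- second-order IMS formula on U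
  have hb2 : ∀ (j : Fin N) (i : Fin 2), ∀ x ∈ (fatDiag N)ᶜ,
      Dop α j i (fun y => Dop α j i Ψ y) x
        = (Φ x : ℂ) * Dop α j i (fun y => Dop α j i ψ y) x
          + (-2*Complex.I) * ((pdR j i Φ x : ℝ) : ℂ) * Dop α j i ψ x
          - ((pdR j i (fun y => pdR j i Φ y) x : ℝ) : ℂ) * ψ x := by
    intro j i x hx
    have hev : (fun y => Dop α j i Ψ y) =ᶠ[nhds x]
        (fun y => (Φ y : ℂ) * Dop α j i ψ y
          + (-Complex.I) * (((pdR j i Φ y : ℝ) : ℂ) * ψ y)) :=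
      Filter.eventually_of_mem (hopU.mem_nhds hx) fun y hy => hb1 j i y hy
    have hd1 : DifferentiableAt ℝ (fun y => (Φ y : ℂ) * Dop α j i ψ y) x :=
      (hdiffC (hdiffRG hΦ x)).mul (hdiffU (hDψU j i) x hx)
    have hd2 : DifferentiableAt ℝ (fun y => ((pdR j i Φ y : ℝ) : ℂ) * ψ y) x :=
      (hdiffC (hdiffRG (hΦ' j i) x)).mul (hdiffU hψ x hx)
    rw [Dop_congr j i x hev,
      Dop_add j i x hd1 (hd2.const_mul (-Complex.I)),
      Dop_mulΦ j i Φ (fun y => Dop α j i ψ y) x (hdiffRG hΦ x) (hdiffU (hDψU j i) x hx),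
      Dop_cmul j i (-Complex.I) x hd2,
      Dop_mulΦ j i (fun y => pdR j i Φ y) ψ x (hdiffRG (hΦ' j i) x) (hdiffU hψ x hx)]
    linear_combination (((pdR j i (fun y => pdR j i Φ y) x : ℝ) : ℂ) * ψ x) * Complex.I_sq
  -- pointwise identity for the first integration by parts
  have hptA : ∀ (j : Fin N) (i : Fin 2) (x : Conf N),
      conj (Ψ x) * Dop α j i (fun y => Dop α j i Ψ y) x - ((‖Dop α j i Ψ x‖^2 : ℝ) : ℂ)
        = (-Complex.I) * pd j i (fun y => conj (Ψ y) * Dop α j i Ψ y) x := by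
    intro j i x
    have hpdG : pd j i (fun y => conj (Ψ y) * Dop α j i Ψ y) x
        = conj (pd j i Ψ x) * Dop α j i Ψ x + conj (Ψ x) * pd j i (fun y => Dop α j i Ψ y) x := by
      rw [Anyon.pd_mul (hdiffG hconjΨ x) (hdiffG (hDΨs j i) x), Anyon.pd_conj]
    have hnorm : ((‖Dop α j i Ψ x‖^2 : ℝ) : ℂ) = conj (Dop α j i Ψ x) * Dop α j i Ψ x := by
      push_cast
      exact (Complex.conj_mul' _).symm
    have hDD : Dop α j i (fun y => Dop α j i Ψ y) x
        = -Complex.I * pd j i (fun y => Dop α j i Ψ y) x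
          + ((α * Avec j x i : ℝ) : ℂ) * Dop α j i Ψ x := rfl
    have hD : Dop α j i Ψ x
        = -Complex.I * pd j i Ψ x + ((α * Avec j x i : ℝ) : ℂ) * Ψ x := rfl
    rw [hnorm, hpdG, hDD, hD]
    simp only [map_add, map_mul, map_neg, Complex.conj_I, Complex.conj_ofReal]
    ring
  -- integrability helpers
  have hcont0 : ∀ {f : Conf N → ℂ}, Continuous f → (∀ x ∉ tsupport Φ, f x = 0) → Integrable f :=
    fun hf h0 => hf.integrable_of_hasCompactSupport (HasCompactSupport.intro hcpt h0)
  have hcont0R : ∀ {f : Conf N → ℝ}, Continuous f → (∀ x ∉ tsupport Φ, f x = 0) → Integrable f :=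
    fun hf h0 => hf.integrable_of_hasCompactSupport (HasCompactSupport.intro hcpt h0)
  have hintDDc : ∀ (j : Fin N) (i : Fin 2),
      Integrable (fun x => conj (Ψ x) * Dop α j i (fun y => Dop α j i Ψ y) x) :=
    fun j i => hcont0 (hconjΨ.continuous.mul (hDDΨs j i).continuous)
      (fun x hx => by rw [hΨ0 x hx]; simp)
  have hintDsq : ∀ (j : Fin N) (i : Fin 2), Integrable (fun x => ‖Dop α j i Ψ x‖^2) :=
    fun j i => hcont0R ((hDΨs j i).continuous.norm.pow 2)
      (fun x hx => by rw [hDΨ0 j i x hx]; simp)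
  have hintDsqC : ∀ (j : Fin N) (i : Fin 2),
      Integrable (fun x => ((‖Dop α j i Ψ x‖^2 : ℝ) : ℂ)) :=
    fun j i => hcont0 (Complex.continuous_ofReal.comp ((hDΨs j i).continuous.norm.pow 2))
      (fun x hx => by rw [hDΨ0 j i x hx]; simp)
  -- first integration by parts
  have hkeyA : ∀ (j : Fin N) (i : Fin 2),
      ∫ x : Conf N, conj (Ψ x) * Dop α j i (fun y => Dop α j i Ψ y) x
        = ((∫ x : Conf N, ‖Dop α j i Ψ x‖^2 : ℝ) : ℂ) := by
    intro j i
    have hG1s : ContDiff ℝ (⊤ : ℕ∞) (fun x => conj (Ψ x) * Dop α j i Ψ x) := hconjΨ.mul (hDΨs j i)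
    have hG1cpt : HasCompactSupport (fun x => conj (Ψ x) * Dop α j i Ψ x) :=
      HasCompactSupport.intro hcpt fun x hx => by rw [hΨ0 x hx]; simp
    have h0 : ∫ x : Conf N, pd j i (fun y => conj (Ψ y) * Dop α j i Ψ y) x = 0 :=
      Anyon.integral_pd_eq_zero _ (hG1s.of_le (by simp)) hG1cpt j i
    have hfun : (fun x => conj (Ψ x) * Dop α j i (fun y => Dop α j i Ψ y) x
        - ((‖Dop α j i Ψ x‖^2 : ℝ) : ℂ))
        = fun x => (-Complex.I) * pd j i (fun y => conj (Ψ y) * Dop α j i Ψ y) x :=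
      funext fun x => hptA j i x
    have h1 : ∫ x : Conf N, (conj (Ψ x) * Dop α j i (fun y => Dop α j i Ψ y) x
        - ((‖Dop α j i Ψ x‖^2 : ℝ) : ℂ)) = 0 := by
      rw [hfun]
      have h2 : ∫ x : Conf N, (-Complex.I) * pd j i (fun y => conj (Ψ y) * Dop α j i Ψ y) x
          = (-Complex.I) * ∫ x : Conf N, pd j i (fun y => conj (Ψ y) * Dop α j i Ψ y) x := by
        simpa [smul_eq_mul] using integral_smul (-Complex.I)
          (fun x : Conf N => pd j i (fun y => conj (Ψ y) * Dop α j i Ψ y) x)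
      rw [h2, h0, mul_zero]
    rw [integral_sub (hintDDc j i) (hintDsqC j i)] at h1
    rw [sub_eq_zero.1 h1]
    exact integral_ofReal
  -- pointwise IMS localization identity
  have hptB : ∀ (j : Fin N) (i : Fin 2) (x : Conf N),
      conj (Ψ x) * Dop α j i (fun y => Dop α j i Ψ y) x
        = ((Φ x : ℝ) : ℂ)^2 * (conj (ψ x) * Dop α j i (fun y => Dop α j i ψ y) x)
          + ((-2*Complex.I) * ((Φ x * pdR j i Φ x : ℝ) : ℂ) * (conj (ψ x) * Dop α j i ψ x)
            - ((Φ x * pdR j i (fun y => pdR j i Φ y) x : ℝ) : ℂ) * (conj (ψ x) * ψ x)) := by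
    intro j i x
    by_cases hx : x ∈ (fatDiag N)ᶜ
    · have hc : conj (Ψ x) = ((Φ x : ℝ) : ℂ) * conj (ψ x) := by
        rw [hΨdef]
        simp [map_mul, Complex.conj_ofReal]
      rw [hb2 j i x hx, hc]
      push_cast
      ring
    · have hx' := hTU x hx
      rw [hΨ0 x hx']
      simp [hΦ0 x hx']
  -- summed pointwise identity, using the eigenvalue equation
  have hsum : ∀ x : Conf N,
      (∑ j, ∑ i, ((1 / (2 * m) : ℝ) : ℂ)
          * (conj (Ψ x) * Dop α j i (fun y => Dop α j i Ψ y) x))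
        = (E : ℂ) * (conj (Ψ x) * Ψ x)
          - (((m * ω ^ 2 / 2) * ∑ j, nrm (x j) ^ 2 : ℝ) : ℂ) * (conj (Ψ x) * Ψ x)
          + ((1 / (2 * m) : ℝ) : ℂ) * ∑ j, ∑ i,
              ((-2*Complex.I) * ((Φ x * pdR j i Φ x : ℝ) : ℂ) * (conj (ψ x) * Dop α j i ψ x)
                - ((Φ x * pdR j i (fun y => pdR j i Φ y) x : ℝ) : ℂ) * (conj (ψ x) * ψ x)) := by
    intro x
    by_cases hx : x ∈ (fatDiag N)ᶜ
    · have step1 : (∑ j, ∑ i, ((1 / (2 * m) : ℝ) : ℂ)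
          * (conj (Ψ x) * Dop α j i (fun y => Dop α j i Ψ y) x))
          = (∑ j, ∑ i, ((1 / (2 * m) : ℝ) : ℂ)
              * (((Φ x : ℝ) : ℂ)^2 * (conj (ψ x) * Dop α j i (fun y => Dop α j i ψ y) x)))
            + ∑ j, ∑ i, ((1 / (2 * m) : ℝ) : ℂ) *
              ((-2*Complex.I) * ((Φ x * pdR j i Φ x : ℝ) : ℂ) * (conj (ψ x) * Dop α j i ψ x)
                - ((Φ x * pdR j i (fun y => pdR j i Φ y) x : ℝ) : ℂ) * (conj (ψ x) * ψ x)) := by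
        rw [← Finset.sum_add_distrib]
        refine Finset.sum_congr rfl fun j _ => ?_
        rw [← Finset.sum_add_distrib]
        refine Finset.sum_congr rfl fun i _ => ?_
        rw [hptB j i x]
        ring
      have step2 : (∑ j, ∑ i, ((1 / (2 * m) : ℝ) : ℂ)
            * (((Φ x : ℝ) : ℂ)^2 * (conj (ψ x) * Dop α j i (fun y => Dop α j i ψ y) x)))
          = ((Φ x : ℝ) : ℂ)^2 * conj (ψ x) * ∑ j, ((1 / (2 * m) : ℝ) : ℂ) * D2 α j ψ x := by
        rw [Finset.mul_sum]
        refine Finset.sum_congr rfl fun j _ => ?_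
        have hD2 : D2 α j ψ x = ∑ i, Dop α j i (fun y => Dop α j i ψ y) x := rfl
        rw [hD2, Finset.mul_sum, Finset.mul_sum]
        exact Finset.sum_congr rfl fun i _ => by ring
      have heq : ∑ j, ((1 / (2 * m) : ℝ) : ℂ) * D2 α j ψ x
          = (E : ℂ) * ψ x
            - (((m * ω ^ 2 / 2) * ∑ j, nrm (x j) ^ 2 : ℝ) : ℂ) * ψ x := by
        linear_combination heig x hx
      have step3 : (∑ j, ∑ i, ((1 / (2 * m) : ℝ) : ℂ) *
            ((-2*Complex.I) * ((Φ x * pdR j i Φ x : ℝ) : ℂ) * (conj (ψ x) * Dop α j i ψ x)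
              - ((Φ x * pdR j i (fun y => pdR j i Φ y) x : ℝ) : ℂ) * (conj (ψ x) * ψ x)))
          = ((1 / (2 * m) : ℝ) : ℂ) * ∑ j, ∑ i,
              ((-2*Complex.I) * ((Φ x * pdR j i Φ x : ℝ) : ℂ) * (conj (ψ x) * Dop α j i ψ x)
                - ((Φ x * pdR j i (fun y => pdR j i Φ y) x : ℝ) : ℂ) * (conj (ψ x) * ψ x)) := by
        rw [Finset.mul_sum]
        exact Finset.sum_congr rfl fun j _ => (Finset.mul_sum _ _ _).symm
      rw [step1, step2, heq, step3]
      have hΨx : Ψ x = ((Φ x : ℝ) : ℂ) * ψ x := by rw [hΨdef]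
      have hcΨx : conj (Ψ x) = ((Φ x : ℝ) : ℂ) * conj (ψ x) := by
        rw [hΨdef]
        simp [map_mul, Complex.conj_ofReal]
      rw [hΨx, hcΨx]
      ring
    · have hx' := hTU x hx
      rw [hΨ0 x hx']
      simp [hΦ0 x hx']
  -- pointwise identity for the second integration by parts
  have hptD : ∀ (j : Fin N) (i : Fin 2) (x : Conf N),
      (-2*Complex.I) * ((Φ x * pdR j i Φ x : ℝ) : ℂ) * (conj (ψ x) * Dop α j i ψ x)
        - ((Φ x * pdR j i (fun y => pdR j i Φ y) x : ℝ) : ℂ) * (conj (ψ x) * ψ x)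
      = -(pd j i (fun y => ((Φ y * pdR j i Φ y : ℝ) : ℂ) * (conj (ψ y) * ψ y)) x)
        + ((pdR j i Φ x : ℝ) : ℂ)^2 * (conj (ψ x) * ψ x)
        + (-2*Complex.I) * (((Φ x : ℝ) : ℂ) * ((pdR j i Φ x : ℝ) : ℂ))
            * ((((conj (ψ x) * pd j i ψ x).im : ℝ) : ℂ)
              + ((α * Avec j x i : ℝ) : ℂ) * (conj (ψ x) * ψ x)) := by
    intro j i x
    by_cases hx : x ∈ (fatDiag N)ᶜ
    · have hd1 : DifferentiableAt ℝ (fun y => ((Φ y * pdR j i Φ y : ℝ) : ℂ)) x :=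
        hdiffC ((hdiffRG hΦ x).mul (hdiffRG (hΦ' j i) x))
      have hd2 : DifferentiableAt ℝ (fun y => conj (ψ y) * ψ y) x :=
        (hdiffU hconjψU x hx).mul (hdiffU hψ x hx)
      have hpdG2 : pd j i (fun y => ((Φ y * pdR j i Φ y : ℝ) : ℂ) * (conj (ψ y) * ψ y)) x
          = ((pdR j i Φ x * pdR j i Φ x + Φ x * pdR j i (fun y => pdR j i Φ y) x : ℝ) : ℂ)
              * (conj (ψ x) * ψ x)
            + ((Φ x * pdR j i Φ x : ℝ) : ℂ)
              * (conj (pd j i ψ x) * ψ x + conj (ψ x) * pd j i ψ x) := by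
        rw [Anyon.pd_mul hd1 hd2,
          Anyon.pd_ofReal (show DifferentiableAt ℝ (fun y => Φ y * pdR j i Φ y) x from
            (hdiffRG hΦ x).mul (hdiffRG (hΦ' j i) x)),
          Anyon.pdR_mul (hdiffRG hΦ x) (hdiffRG (hΦ' j i) x),
          Anyon.pd_mul (hdiffU hconjψU x hx) (hdiffU hψ x hx), Anyon.pd_conj]
      have hDψx : Dop α j i ψ x
          = -Complex.I * pd j i ψ x + ((α * Avec j x i : ℝ) : ℂ) * ψ x := rfl
      have hzim : (((conj (ψ x) * pd j i ψ x).im : ℝ) : ℂ) * (2*Complex.I)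
          = conj (ψ x) * pd j i ψ x - ψ x * conj (pd j i ψ x) := by
        have h1 := Complex.sub_conj (conj (ψ x) * pd j i ψ x)
        have h2 : conj (conj (ψ x) * pd j i ψ x) = ψ x * conj (pd j i ψ x) := by
          rw [map_mul, Complex.conj_conj]
        rw [h2] at h1
        rw [h1]
        push_cast
        ring
      rw [hpdG2, hDψx]
      push_cast
      linear_combination (2 * ((Φ x : ℝ) : ℂ) * ((pdR j i Φ x : ℝ) : ℂ)
          * conj (ψ x) * pd j i ψ x) * Complex.I_sq
        + (((Φ x : ℝ) : ℂ) * ((pdR j i Φ x : ℝ) : ℂ)) * hzim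
    · have hx' := hTU x hx
      have hev : (fun y => ((Φ y * pdR j i Φ y : ℝ) : ℂ) * (conj (ψ y) * ψ y)) =ᶠ[nhds x]
          (0 : Conf N → ℂ) := by
        filter_upwards [hΦev x hx'] with y hy
        simp [hy]
      have hB : pdR j i Φ x = 0 := Anyon.pdR_of_eventually_zero (hΦev x hx')
      rw [Anyon.pd_of_eventually_zero hev, hB]
      simp [hΦ0 x hx']
  -- smoothness / support of the IBP auxiliary function G2
  have hG2s : ∀ (j : Fin N) (i : Fin 2),
      ContDiff ℝ (⊤ : ℕ∞) (fun y => ((Φ y * pdR j i Φ y : ℝ) : ℂ) * (conj (ψ y) * ψ y)) := by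
    intro j i
    refine Anyon.contDiff_glue hsupp ?_ ?_
    · exact ((Complex.ofRealCLM.contDiff.comp (hΦ.mul (hΦ' j i))).contDiffOn).mul
        (hconjψU.mul hψ)
    · intro x hx
      simp [hΦ0 x hx]
  have hG20 : ∀ (j : Fin N) (i : Fin 2), ∀ x ∉ tsupport Φ,
      (fun y => ((Φ y * pdR j i Φ y : ℝ) : ℂ) * (conj (ψ y) * ψ y)) x = 0 :=
    fun j i x hx => by simp [hΦ0 x hx]
  -- integrability of all pieces appearing in the second integration by parts
  have hintpdG2 : ∀ (j : Fin N) (i : Fin 2),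
      Integrable (fun x =>
        pd j i (fun y => ((Φ y * pdR j i Φ y : ℝ) : ℂ) * (conj (ψ y) * ψ y)) x) := by
    intro j i
    refine hcont0 (ContDiff.continuous (n := (⊤:ℕ∞))
      (((hG2s j i).fderiv_right (by simp)).clm_apply contDiff_const)) ?_
    intro x hx
    refine Anyon.pd_of_eventually_zero ?_
    filter_upwards [hΦev x hx] with y hy
    simp [hy]
  have hintYq : ∀ (j : Fin N) (i : Fin 2),
      Integrable (fun x => ((pdR j i Φ x : ℝ) : ℂ)^2 * (conj (ψ x) * ψ x)) := by
    intro j i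
    refine Anyon.integrable_glue hcpt hsupp ?_ ?_
    · exact (((Complex.ofRealCLM.contDiff.comp (hΦ' j i)).continuous.pow 2).continuousOn).mul
        ((hconjψU.continuousOn).mul (hψ.continuousOn))
    · intro x hx
      rw [Anyon.pdR_of_eventually_zero (hΦev x hx)]
      simp
  have hintYw : ∀ (j : Fin N) (i : Fin 2),
      Integrable (fun x => (-2*Complex.I) * (((Φ x : ℝ) : ℂ) * ((pdR j i Φ x : ℝ) : ℂ))
        * ((((conj (ψ x) * pd j i ψ x).im : ℝ) : ℂ)
          + ((α * Avec j x i : ℝ) : ℂ) * (conj (ψ x) * ψ x))) := by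
    intro j i
    refine Anyon.integrable_glue hcpt hsupp ?_ ?_
    · refine (continuousOn_const.mul ((hΦC.continuous.continuousOn).mul
        ((Complex.ofRealCLM.contDiff.comp (hΦ' j i)).continuous.continuousOn))).mul ?_
      refine ContinuousOn.add ?_
        (((haC j i).continuousOn).mul ((hconjψU.continuousOn).mul (hψ.continuousOn)))
      exact Complex.continuous_ofReal.comp_continuousOn
        (Complex.continuous_im.comp_continuousOn
          ((hconjψU.continuousOn).mul ((hpdU hψ j i).continuousOn)))
    · intro x hx
      simp [hΦ0 x hx]
  have hintQji : ∀ (j : Fin N) (i : Fin 2),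
      Integrable (fun x => (pdR j i Φ x)^2 * ‖ψ x‖^2) := by
    intro j i
    refine Anyon.integrable_glue hcpt hsupp ?_ ?_
    · exact (((hΦ' j i).continuous.pow 2).continuousOn).mul ((hψ.continuousOn.norm).pow 2)
    · intro x hx
      rw [Anyon.pdR_of_eventually_zero (hΦev x hx)]
      simp
  have hintw : ∀ (j : Fin N) (i : Fin 2),
      Integrable (fun x => Φ x * pdR j i Φ x *
        ((conj (ψ x) * pd j i ψ x).im + α * Avec j x i * ‖ψ x‖^2)) := by
    intro j i
    refine Anyon.integrable_glue hcpt hsupp ?_ ?_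
    · refine ((hΦ.continuous.mul (hΦ' j i).continuous).continuousOn).mul ?_
      refine ContinuousOn.add ?_
        (((contDiffOn_const.mul (Anyon.contDiffOn_Avec j i)).continuousOn).mul
          ((hψ.continuousOn.norm).pow 2))
      exact Complex.continuous_im.comp_continuousOn
        ((hconjψU.continuousOn).mul ((hpdU hψ j i).continuousOn))
    · intro x hx
      simp [hΦ0 x hx]
  -- second integration by parts: integral identity
  have hkeyD : ∀ (j : Fin N) (i : Fin 2),
      (∫ x : Conf N,
          ((-2*Complex.I) * ((Φ x * pdR j i Φ x : ℝ) : ℂ) * (conj (ψ x) * Dop α j i ψ x)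
            - ((Φ x * pdR j i (fun y => pdR j i Φ y) x : ℝ) : ℂ) * (conj (ψ x) * ψ x)))
        = ((∫ x : Conf N, (pdR j i Φ x)^2 * ‖ψ x‖^2 : ℝ) : ℂ)
          + (-2*Complex.I) * ((∫ x : Conf N, Φ x * pdR j i Φ x *
              ((conj (ψ x) * pd j i ψ x).im + α * Avec j x i * ‖ψ x‖^2) : ℝ) : ℂ) := by
    intro j i
    have h1 : (∫ x : Conf N,
        ((-2*Complex.I) * ((Φ x * pdR j i Φ x : ℝ) : ℂ) * (conj (ψ x) * Dop α j i ψ x)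
          - ((Φ x * pdR j i (fun y => pdR j i Φ y) x : ℝ) : ℂ) * (conj (ψ x) * ψ x)))
        = ∫ x : Conf N,
          (-(pd j i (fun y => ((Φ y * pdR j i Φ y : ℝ) : ℂ) * (conj (ψ y) * ψ y)) x)
            + ((pdR j i Φ x : ℝ) : ℂ)^2 * (conj (ψ x) * ψ x)
            + (-2*Complex.I) * (((Φ x : ℝ) : ℂ) * ((pdR j i Φ x : ℝ) : ℂ))
                * ((((conj (ψ x) * pd j i ψ x).im : ℝ) : ℂ)
                  + ((α * Avec j x i : ℝ) : ℂ) * (conj (ψ x) * ψ x))) :=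
      integral_congr_ae (MeasureTheory.ae_of_all _ fun x => hptD j i x)
    have hA : Integrable (fun x : Conf N =>
        -(pd j i (fun y => ((Φ y * pdR j i Φ y : ℝ) : ℂ) * (conj (ψ y) * ψ y)) x)) :=
      (hintpdG2 j i).neg
    have hAB : Integrable (fun x : Conf N =>
        -(pd j i (fun y => ((Φ y * pdR j i Φ y : ℝ) : ℂ) * (conj (ψ y) * ψ y)) x)
          + ((pdR j i Φ x : ℝ) : ℂ)^2 * (conj (ψ x) * ψ x)) := hA.add (hintYq j i)
    rw [h1, integral_add hAB (hintYw j i), integral_add hA (hintYq j i), integral_neg,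
      Anyon.integral_pd_eq_zero _ ((hG2s j i).of_le (by simp))
        (HasCompactSupport.intro hcpt (hG20 j i)) j i, neg_zero, zero_add]
    congr 1
    · have h2 : (fun x : Conf N => ((pdR j i Φ x : ℝ) : ℂ)^2 * (conj (ψ x) * ψ x))
          = fun x : Conf N => (((pdR j i Φ x)^2 * ‖ψ x‖^2 : ℝ) : ℂ) := by
        funext x
        rw [Complex.conj_mul']
        push_cast
        ring
      rw [h2]
      exact integral_ofReal
    · have h2 : (fun x : Conf N => (-2*Complex.I) * (((Φ x : ℝ) : ℂ) * ((pdR j i Φ x : ℝ) : ℂ))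
          * ((((conj (ψ x) * pd j i ψ x).im : ℝ) : ℂ)
            + ((α * Avec j x i : ℝ) : ℂ) * (conj (ψ x) * ψ x)))
          = fun x : Conf N => (-2*Complex.I) * ((Φ x * pdR j i Φ x *
              ((conj (ψ x) * pd j i ψ x).im + α * Avec j x i * ‖ψ x‖^2) : ℝ) : ℂ) := by
        funext x
        rw [Complex.conj_mul']
        push_cast
        ring
      rw [h2]
      have h3 : ∫ x : Conf N, (-2*Complex.I) * ((Φ x * pdR j i Φ x *
            ((conj (ψ x) * pd j i ψ x).im + α * Avec j x i * ‖ψ x‖^2) : ℝ) : ℂ)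
          = (-2*Complex.I) * ∫ x : Conf N, ((Φ x * pdR j i Φ x *
            ((conj (ψ x) * pd j i ψ x).im + α * Avec j x i * ‖ψ x‖^2) : ℝ) : ℂ) := by
        simpa only [smul_eq_mul] using integral_smul (-2*Complex.I) (fun x : Conf N =>
          ((Φ x * pdR j i Φ x *
            ((conj (ψ x) * pd j i ψ x).im + α * Avec j x i * ‖ψ x‖^2) : ℝ) : ℂ))
      rw [h3]
      congr 1
      exact integral_ofReal
  -- remaining integrability facts
  have hΦ'' : ∀ (j : Fin N) (i : Fin 2),
      ContDiff ℝ (⊤ : ℕ∞) (fun x => pdR j i (fun y => pdR j i Φ y) x) :=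
    fun j i => ((hΦ' j i).fderiv_right (by simp)).clm_apply contDiff_const
  have hintE : Integrable (fun x : Conf N => (E : ℂ) * (conj (Ψ x) * Ψ x)) :=
    (hcont0 (f := fun x => conj (Ψ x) * Ψ x) (hconjΨ.continuous.mul hΨs.continuous)
      (fun x hx => by rw [hΨ0 x hx]; simp)).const_mul _
  have hVcont : Continuous (fun x : Conf N => (m * ω ^ 2 / 2) * ∑ j, nrm (x j) ^ 2) := by
    refine continuous_const.mul (continuous_finset_sum _ fun j _ => ?_)
    show Continuous fun x : Conf N => Real.sqrt ((x j) 0 ^ 2 + (x j) 1 ^ 2) ^ 2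
    exact (Real.continuous_sqrt.comp (by fun_prop)).pow 2
  have hintV : Integrable (fun x : Conf N =>
      (((m * ω ^ 2 / 2) * ∑ j, nrm (x j) ^ 2 : ℝ) : ℂ) * (conj (Ψ x) * Ψ x)) :=
    hcont0 ((Complex.continuous_ofReal.comp hVcont).mul
      (hconjΨ.continuous.mul hΨs.continuous)) (fun x hx => by rw [hΨ0 x hx]; simp)
  have hintX : ∀ (j : Fin N) (i : Fin 2), Integrable (fun x : Conf N =>
      (-2*Complex.I) * ((Φ x * pdR j i Φ x : ℝ) : ℂ) * (conj (ψ x) * Dop α j i ψ x)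
        - ((Φ x * pdR j i (fun y => pdR j i Φ y) x : ℝ) : ℂ) * (conj (ψ x) * ψ x)) := by
    intro j i
    refine Anyon.integrable_glue hcpt hsupp ?_ ?_
    · refine ContinuousOn.sub ?_ ?_
      · exact (continuousOn_const.mul ((Complex.continuous_ofReal.comp
          (hΦ.continuous.mul (hΦ' j i).continuous)).continuousOn)).mul
          ((hconjψU.continuousOn).mul ((hDψU j i).continuousOn))
      · exact ((Complex.continuous_ofReal.comp
          (hΦ.continuous.mul (hΦ'' j i).continuous)).continuousOn).mul
          ((hconjψU.continuousOn).mul (hψ.continuousOn))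
    · intro x hx
      simp [hΦ0 x hx]
  -- value of the left-hand side of the summed identity
  have hTsum : (∫ x : Conf N, ∑ j, ∑ i, ((1 / (2 * m) : ℝ) : ℂ)
        * (conj (Ψ x) * Dop α j i (fun y => Dop α j i Ψ y) x))
      = ∑ j, ∑ i, ((1 / (2 * m) : ℝ) : ℂ)
        * ((∫ x : Conf N, ‖Dop α j i Ψ x‖^2 : ℝ) : ℂ) := by
    rw [integral_finset_sum _ (fun j _ => integrable_finset_sum _
      (fun i _ => (hintDDc j i).const_mul _))]
    refine Finset.sum_congr rfl fun j _ => ?_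
    rw [integral_finset_sum _ (fun i _ => (hintDDc j i).const_mul _)]
    refine Finset.sum_congr rfl fun i _ => ?_
    have h1 : ∫ x : Conf N, ((1 / (2 * m) : ℝ) : ℂ)
          * (conj (Ψ x) * Dop α j i (fun y => Dop α j i Ψ y) x)
        = ((1 / (2 * m) : ℝ) : ℂ)
          * ∫ x : Conf N, conj (Ψ x) * Dop α j i (fun y => Dop α j i Ψ y) x := by
      simpa only [smul_eq_mul] using integral_smul ((1 / (2 * m) : ℝ) : ℂ)
        (fun x : Conf N => conj (Ψ x) * Dop α j i (fun y => Dop α j i Ψ y) x)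
    rw [h1, hkeyA j i]
  -- value of the right-hand side
  have hEterm : ∫ x : Conf N, (E : ℂ) * (conj (Ψ x) * Ψ x)
      = (E : ℂ) * ((∫ x : Conf N, ‖Ψ x‖^2 : ℝ) : ℂ) := by
    have h1 : ∫ x : Conf N, (E : ℂ) * (conj (Ψ x) * Ψ x)
        = (E : ℂ) * ∫ x : Conf N, conj (Ψ x) * Ψ x := by
      simpa only [smul_eq_mul] using integral_smul (E : ℂ)
        (fun x : Conf N => conj (Ψ x) * Ψ x)
    rw [h1]
    congr 1
    have h2 : (fun x : Conf N => conj (Ψ x) * Ψ x)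
        = fun x : Conf N => ((‖Ψ x‖^2 : ℝ) : ℂ) := by
      funext x
      rw [Complex.conj_mul']
      push_cast
      ring
    rw [h2]
    exact integral_ofReal
  have hVterm : ∫ x : Conf N,
        (((m * ω ^ 2 / 2) * ∑ j, nrm (x j) ^ 2 : ℝ) : ℂ) * (conj (Ψ x) * Ψ x)
      = ((∫ x : Conf N, (m * ω ^ 2 / 2) * (∑ j, nrm (x j) ^ 2) * ‖Ψ x‖^2 : ℝ) : ℂ) := by
    have h2 : (fun x : Conf N =>
          (((m * ω ^ 2 / 2) * ∑ j, nrm (x j) ^ 2 : ℝ) : ℂ) * (conj (Ψ x) * Ψ x))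
        = fun x : Conf N =>
          (((m * ω ^ 2 / 2) * (∑ j, nrm (x j) ^ 2) * ‖Ψ x‖^2 : ℝ) : ℂ) := by
      funext x
      rw [Complex.conj_mul']
      push_cast
      ring
    rw [h2]
    exact integral_ofReal
  have hCterm : ∫ x : Conf N, ((1 / (2 * m) : ℝ) : ℂ) * ∑ j, ∑ i,
        ((-2*Complex.I) * ((Φ x * pdR j i Φ x : ℝ) : ℂ) * (conj (ψ x) * Dop α j i ψ x)
          - ((Φ x * pdR j i (fun y => pdR j i Φ y) x : ℝ) : ℂ) * (conj (ψ x) * ψ x))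
      = ((1 / (2 * m) : ℝ) : ℂ) *
          (((∑ j, ∑ i, ∫ x : Conf N, (pdR j i Φ x)^2 * ‖ψ x‖^2 : ℝ) : ℂ)
            + (-2*Complex.I) * ((∑ j, ∑ i, ∫ x : Conf N, Φ x * pdR j i Φ x *
                ((conj (ψ x) * pd j i ψ x).im + α * Avec j x i * ‖ψ x‖^2) : ℝ) : ℂ)) := by
    have h1 : ∫ x : Conf N, ((1 / (2 * m) : ℝ) : ℂ) * ∑ j, ∑ i,
          ((-2*Complex.I) * ((Φ x * pdR j i Φ x : ℝ) : ℂ) * (conj (ψ x) * Dop α j i ψ x)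
            - ((Φ x * pdR j i (fun y => pdR j i Φ y) x : ℝ) : ℂ) * (conj (ψ x) * ψ x))
        = ((1 / (2 * m) : ℝ) : ℂ) * ∫ x : Conf N, ∑ j, ∑ i,
          ((-2*Complex.I) * ((Φ x * pdR j i Φ x : ℝ) : ℂ) * (conj (ψ x) * Dop α j i ψ x)
            - ((Φ x * pdR j i (fun y => pdR j i Φ y) x : ℝ) : ℂ) * (conj (ψ x) * ψ x)) := by
      simpa only [smul_eq_mul] using integral_smul ((1 / (2 * m) : ℝ) : ℂ)
        (fun x : Conf N => ∑ j, ∑ i,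
          ((-2*Complex.I) * ((Φ x * pdR j i Φ x : ℝ) : ℂ) * (conj (ψ x) * Dop α j i ψ x)
            - ((Φ x * pdR j i (fun y => pdR j i Φ y) x : ℝ) : ℂ) * (conj (ψ x) * ψ x)))
    rw [h1, integral_finset_sum _ (fun j _ => integrable_finset_sum _ (fun i _ => hintX j i))]
    congr 1
    have h2 : ∀ j : Fin N, (∫ x : Conf N, ∑ i,
          ((-2*Complex.I) * ((Φ x * pdR j i Φ x : ℝ) : ℂ) * (conj (ψ x) * Dop α j i ψ x)
            - ((Φ x * pdR j i (fun y => pdR j i Φ y) x : ℝ) : ℂ) * (conj (ψ x) * ψ x)))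
        = ∑ i, (((∫ x : Conf N, (pdR j i Φ x)^2 * ‖ψ x‖^2 : ℝ) : ℂ)
            + (-2*Complex.I) * ((∫ x : Conf N, Φ x * pdR j i Φ x *
                ((conj (ψ x) * pd j i ψ x).im + α * Avec j x i * ‖ψ x‖^2) : ℝ) : ℂ)) := by
      intro j
      rw [integral_finset_sum _ (fun i _ => hintX j i)]
      exact Finset.sum_congr rfl fun i _ => hkeyD j i
    rw [Finset.sum_congr rfl fun j _ => h2 j]
    have h3 : (∑ j : Fin N, ∑ i : Fin 2,
          (((∫ x : Conf N, (pdR j i Φ x)^2 * ‖ψ x‖^2 : ℝ) : ℂ)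
            + (-2*Complex.I) * ((∫ x : Conf N, Φ x * pdR j i Φ x *
                ((conj (ψ x) * pd j i ψ x).im + α * Avec j x i * ‖ψ x‖^2) : ℝ) : ℂ)))
        = (∑ j : Fin N, ∑ i : Fin 2,
            ((∫ x : Conf N, (pdR j i Φ x)^2 * ‖ψ x‖^2 : ℝ) : ℂ))
          + ∑ j : Fin N, ∑ i : Fin 2,
            (-2*Complex.I) * ((∫ x : Conf N, Φ x * pdR j i Φ x *
                ((conj (ψ x) * pd j i ψ x).im + α * Avec j x i * ‖ψ x‖^2) : ℝ) : ℂ) := by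
      rw [← Finset.sum_add_distrib]
      exact Finset.sum_congr rfl fun j _ => by rw [← Finset.sum_add_distrib]
    rw [h3]
    congr 1
    · push_cast
      rfl
    · push_cast
      rw [Finset.mul_sum]
      exact Finset.sum_congr rfl fun j _ => by rw [Finset.mul_sum]
  -- split the integral of the right-hand side of `hsum`
  have hintC : Integrable (fun x : Conf N => ((1 / (2 * m) : ℝ) : ℂ) * ∑ j, ∑ i,
      ((-2*Complex.I) * ((Φ x * pdR j i Φ x : ℝ) : ℂ) * (conj (ψ x) * Dop α j i ψ x)
        - ((Φ x * pdR j i (fun y => pdR j i Φ y) x : ℝ) : ℂ) * (conj (ψ x) * ψ x))) :=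
    (integrable_finset_sum _ (fun j _ => integrable_finset_sum _
      (fun i _ => hintX j i))).const_mul _
  have hABint : Integrable (fun x : Conf N => (E : ℂ) * (conj (Ψ x) * Ψ x)
      - (((m * ω ^ 2 / 2) * ∑ j, nrm (x j) ^ 2 : ℝ) : ℂ) * (conj (Ψ x) * Ψ x)) :=
    hintE.sub hintV
  have hsplit : ∫ x : Conf N, ((E : ℂ) * (conj (Ψ x) * Ψ x)
        - (((m * ω ^ 2 / 2) * ∑ j, nrm (x j) ^ 2 : ℝ) : ℂ) * (conj (Ψ x) * Ψ x)
        + ((1 / (2 * m) : ℝ) : ℂ) * ∑ j, ∑ i,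
            ((-2*Complex.I) * ((Φ x * pdR j i Φ x : ℝ) : ℂ) * (conj (ψ x) * Dop α j i ψ x)
              - ((Φ x * pdR j i (fun y => pdR j i Φ y) x : ℝ) : ℂ) * (conj (ψ x) * ψ x)))
      = (∫ x : Conf N, (E : ℂ) * (conj (Ψ x) * Ψ x))
        - (∫ x : Conf N,
            (((m * ω ^ 2 / 2) * ∑ j, nrm (x j) ^ 2 : ℝ) : ℂ) * (conj (Ψ x) * Ψ x))
        + ∫ x : Conf N, ((1 / (2 * m) : ℝ) : ℂ) * ∑ j, ∑ i,
            ((-2*Complex.I) * ((Φ x * pdR j i Φ x : ℝ) : ℂ) * (conj (ψ x) * Dop α j i ψ x)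
              - ((Φ x * pdR j i (fun y => pdR j i Φ y) x : ℝ) : ℂ) * (conj (ψ x) * ψ x)) := by
    rw [integral_add hABint hintC, integral_sub hintE hintV]
  -- the master complex identity
  have hmaster : ((∑ j, ∑ i, ∫ x : Conf N, ‖Dop α j i Ψ x‖^2 : ℝ) : ℂ)
        * ((1 / (2 * m) : ℝ) : ℂ)
      = ((E * (∫ x : Conf N, ‖Ψ x‖^2)
          - (∫ x : Conf N, (m * ω ^ 2 / 2) * (∑ j, nrm (x j) ^ 2) * ‖Ψ x‖^2)
          + (1 / (2 * m)) * ∑ j, ∑ i, ∫ x : Conf N, (pdR j i Φ x)^2 * ‖ψ x‖^2 : ℝ) : ℂ)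
        + ((1 / (2 * m) : ℝ) : ℂ) * ((-2*Complex.I)
            * ((∑ j, ∑ i, ∫ x : Conf N, Φ x * pdR j i Φ x *
                ((conj (ψ x) * pd j i ψ x).im + α * Avec j x i * ‖ψ x‖^2) : ℝ) : ℂ)) := by
    have e1 : ((∑ j, ∑ i, ∫ x : Conf N, ‖Dop α j i Ψ x‖^2 : ℝ) : ℂ)
          * ((1 / (2 * m) : ℝ) : ℂ)
        = ∑ j, ∑ i, ((1 / (2 * m) : ℝ) : ℂ)
            * ((∫ x : Conf N, ‖Dop α j i Ψ x‖^2 : ℝ) : ℂ) := by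
      push_cast
      rw [Finset.sum_mul]
      refine Finset.sum_congr rfl fun j _ => ?_
      rw [Finset.sum_mul]
      exact Finset.sum_congr rfl fun i _ => by ring
    have e2 := integral_congr_ae (μ := (volume : Measure (Conf N)))
      (MeasureTheory.ae_of_all _ hsum)
    rw [e1, ← hTsum, e2, hsplit, hEterm, hVterm, hCterm]
    push_cast
    ring
  -- extract the real part
  have him : (((1 / (2 * m) : ℝ) : ℂ) * ((-2*Complex.I)
      * ((∑ j, ∑ i, ∫ x : Conf N, Φ x * pdR j i Φ x *
          ((conj (ψ x) * pd j i ψ x).im + α * Avec j x i * ‖ψ x‖^2) : ℝ) : ℂ))).re = 0 := by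
    simp [Complex.mul_re, Complex.mul_im]
  have hre := congrArg Complex.re hmaster
  rw [Complex.add_re, him, add_zero] at hre
  have hre2 : (∑ j, ∑ i, ∫ x : Conf N, ‖Dop α j i Ψ x‖^2) * (1 / (2 * m))
      = E * (∫ x : Conf N, ‖Ψ x‖^2)
        - (∫ x : Conf N, (m * ω ^ 2 / 2) * (∑ j, nrm (x j) ^ 2) * ‖Ψ x‖^2)
        + (1 / (2 * m)) * ∑ j, ∑ i, ∫ x : Conf N, (pdR j i Φ x)^2 * ‖ψ x‖^2 := by
    have h1 : (((∑ j, ∑ i, ∫ x : Conf N, ‖Dop α j i Ψ x‖^2 : ℝ) : ℂ)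
        * ((1 / (2 * m) : ℝ) : ℂ)).re
        = (∑ j, ∑ i, ∫ x : Conf N, ‖Dop α j i Ψ x‖^2) * (1 / (2 * m)) := by
      rw [← Complex.ofReal_mul, Complex.ofReal_re]
    rw [h1, Complex.ofReal_re] at hre
    exact hre
  -- split the goal integral
  have hintT : Integrable (fun x : Conf N =>
      (1 / (2 * m)) * ∑ j, ∑ i, ‖Dop α j i Ψ x‖^2) :=
    (integrable_finset_sum _ (fun j _ => integrable_finset_sum _
      (fun i _ => hintDsq j i))).const_mul _
  have hintVR : Integrable (fun x : Conf N =>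
      (m * ω ^ 2 / 2) * (∑ j, nrm (x j) ^ 2) * ‖Ψ x‖^2) :=
    hcont0R ((hVcont.mul (hΨs.continuous.norm.pow 2)))
      (fun x hx => by rw [hΨ0 x hx]; simp)
  have hgoalL : ∫ x : Conf N,
        ((1 / (2 * m)) * ∑ j, ∑ i, ‖Dop α j i Ψ x‖^2
          + (m * ω ^ 2 / 2) * (∑ j, nrm (x j) ^ 2) * ‖Ψ x‖^2)
      = (1 / (2 * m)) * (∑ j, ∑ i, ∫ x : Conf N, ‖Dop α j i Ψ x‖^2)
        + ∫ x : Conf N, (m * ω ^ 2 / 2) * (∑ j, nrm (x j) ^ 2) * ‖Ψ x‖^2 := by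
    rw [integral_add hintT hintVR]
    congr 1
    have h1 : ∫ x : Conf N, (1 / (2 * m)) * ∑ j, ∑ i, ‖Dop α j i Ψ x‖^2
        = (1 / (2 * m)) * ∫ x : Conf N, ∑ j, ∑ i, ‖Dop α j i Ψ x‖^2 := by
      simpa only [smul_eq_mul] using integral_smul (1 / (2 * m))
        (fun x : Conf N => ∑ j, ∑ i, ‖Dop α j i Ψ x‖^2)
    rw [h1, integral_finset_sum _ (fun j _ => integrable_finset_sum _
      (fun i _ => hintDsq j i))]
    congr 1
    exact Finset.sum_congr rfl fun j _ =>
      integral_finset_sum _ (fun i _ => hintDsq j i)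
  have hQgoal : ∫ x : Conf N, (∑ j, ∑ i, (pdR j i Φ x)^2) * ‖ψ x‖^2
      = ∑ j, ∑ i, ∫ x : Conf N, (pdR j i Φ x)^2 * ‖ψ x‖^2 := by
    have h1 : (fun x : Conf N => (∑ j, ∑ i, (pdR j i Φ x)^2) * ‖ψ x‖^2)
        = fun x : Conf N => ∑ j, ∑ i, (pdR j i Φ x)^2 * ‖ψ x‖^2 := by
      funext x
      rw [Finset.sum_mul]
      exact Finset.sum_congr rfl fun j _ => by rw [Finset.sum_mul]
    rw [h1, integral_finset_sum _ (fun j _ => integrable_finset_sum _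
      (fun i _ => hintQji j i))]
    exact Finset.sum_congr rfl fun j _ =>
      integral_finset_sum _ (fun i _ => hintQji j i)
  rw [hgoalL, hQgoal]
  linarith [hre2]
end
end

section
/- Let N ≥ 1, α ∈ ℝ, and let g : ℂ^N → ℂ be holomorphic (complex differentiable in all variables). Define, for x = (x₁,…,x_N) ∈ (ℝ²)^N with z_j = x_{j,1} + i x_{j,2}, the functions Ψ₊(x) := (∏_{1≤j<k≤N} |x_j − x_k|^{−α}) · conj(g(z₁,…,z_N)) and Ψ₋(x) := (∏_{1≤j<k≤N} |x_j − x_k|^{α}) · g(z₁,…,z_N). Then at every point x of (ℝ²)^N ∖ △△ one has Σ_{j=1}^N D_j² Ψ₊(x) = 0 and Σ_{j=1}^N D_j² Ψ₋(x) = 0; i.e., Ψ₊ and Ψ₋ are generalized zero-energy eigenfunctions of the N-anyon kinetic energy operator on the complement of the fat diagonal. -/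
/-!
Write `z_j` for the complex coordinates and `S_j = ∑_{k ≠ j} (z_j - z_k)⁻¹`. Then
`A_j = (Im S_j, Re S_j)` and `∇_j log ∏_{k<l} |x_k - x_l| = (Re S_j, -Im S_j)`, so for
`Ψ_q = ∏_{k<l} |x_k - x_l|^α · q(z)` with `q` holomorphic the two components of `D_j` give
`D_{j,1} Ψ_q = -i Ψ_{K q}` and `D_{j,2} Ψ_q = Ψ_{K q}`, where `K q = ∂_{z_j} q + α S_j q` is
again holomorphic off the diagonals. Hence `D_j² Ψ_q = ((-i)² + 1²) Ψ_{K² q} = 0`. For `Ψ₊`,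
complex conjugation turns `D_j` at coupling `α` into `-D_j` at coupling `-α`.

That `∂_{z_j} g` is holomorphic for an entire `g` on `ℂ^N` is proved directly: difference
quotients converge locally uniformly by the Schwarz lemma, and Cauchy estimates pass
holomorphy to the limit.
-/

open MeasureTheory Finset
open scoped BigOperators ComplexConjugate

noncomputable section

section Holomorphic

open Metric Filter Set
open scoped Topology

variable {E G : Type*} [NormedAddCommGroup E] [NormedSpace ℂ E]
  [NormedAddCommGroup G] [NormedSpace ℂ G]

theorem norm_fderiv_le_of_forall_norm_le {f : E → G} {c : E} {r M : ℝ} (hr : 0 < r)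
    (hf : DifferentiableOn ℂ f (ball c r)) (hM : ∀ w ∈ ball c r, ‖f w‖ ≤ M) :
    ‖fderiv ℂ f c‖ ≤ 2 * M / r := by
  refine Complex.norm_fderiv_le_div_of_mapsTo_ball hf (fun w hw => ?_) hr
  rw [mem_closedBall, dist_eq_norm]
  linarith [norm_sub_le (f w) (f c), hM w hw, hM c (mem_ball_self hr)]

/-- The Schwarz lemma of order two, applied to the Taylor remainder. -/
theorem norm_sub_sub_fderiv_le {f : E → G} {c z : E} {r M : ℝ}
    (hf : DifferentiableOn ℂ f (ball c r)) (hM : ∀ w ∈ ball c r, ‖f w‖ ≤ M) (hz : z ∈ ball c r) :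
    ‖f z - f c - fderiv ℂ f c (z - c)‖ ≤ 4 * M * (‖z - c‖ / r) ^ 2 := by
  have hr : 0 < r := nonempty_ball.mp ⟨z, hz⟩
  set ρ : E → G := fun w => f w - f c - fderiv ℂ f c (w - c)
  have hfc : DifferentiableAt ℂ f c := hf.differentiableAt (ball_mem_nhds c hr)
  have hρ : DifferentiableOn ℂ ρ (ball c r) :=
    (hf.sub_const _).sub ((fderiv ℂ f c).differentiable.comp
      (differentiable_id.sub_const c)).differentiableOn
  have hmaps : MapsTo ρ (ball c r) (closedBall (ρ c) (4 * M)) := by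
    intro w hw
    have hD := norm_fderiv_le_of_forall_norm_le hr hf hM
    have hwc : ‖w - c‖ ≤ r := by rw [← dist_eq_norm]; exact (mem_ball.mp hw).le
    simp only [ρ, sub_self, map_zero, mem_closedBall, dist_zero_right]
    calc ‖f w - f c - fderiv ℂ f c (w - c)‖
        ≤ ‖f w‖ + ‖f c‖ + ‖fderiv ℂ f c‖ * ‖w - c‖ := by
          refine (norm_sub_le _ _).trans (add_le_add (norm_sub_le _ _) ?_)
          exact (fderiv ℂ f c).le_opNorm _
      _ ≤ M + M + 2 * M / r * r := by
          gcongr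
          · exact hM w hw
          · exact hM c (mem_ball_self hr)
          · exact (norm_nonneg _).trans hD
      _ = 4 * M := by field_simp; ring
  have hlittle : (ρ · - ρ c) =o[𝓝 c] (fun w => ‖w - c‖ ^ 1) := by
    simpa [ρ] using hfc.hasFDerivAt.isLittleO.norm_right
  simpa [ρ, dist_eq_norm] using
    Complex.dist_le_mul_div_pow_of_mapsTo_ball_of_isLittleO hρ hmaps hlittle hz

theorem norm_inv_smul_sub_sub_fderiv_le {f : E → G} {c v : E} {r M : ℝ}
    (hf : DifferentiableOn ℂ f (ball c r)) (hM : ∀ w ∈ ball c r, ‖f w‖ ≤ M) {t : ℂ}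
    (ht₀ : t ≠ 0) (ht : ‖t • v‖ < r) :
    ‖t⁻¹ • (f (c + t • v) - f c) - fderiv ℂ f c v‖ ≤ 4 * M * ‖t‖ * (‖v‖ / r) ^ 2 := by
  have hmem : c + t • v ∈ ball c r := by simpa [mem_ball, dist_eq_norm] using ht
  have key := norm_sub_sub_fderiv_le hf hM hmem
  rw [add_sub_cancel_left] at key
  have heq : t⁻¹ • (f (c + t • v) - f c) - fderiv ℂ f c v
      = t⁻¹ • (f (c + t • v) - f c - fderiv ℂ f c (t • v)) := by
    rw [map_smul, smul_sub, smul_sub, inv_smul_smul₀ ht₀, smul_sub]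
  rw [norm_smul] at key
  rw [heq, norm_smul, norm_inv]
  calc ‖t‖⁻¹ * ‖f (c + t • v) - f c - fderiv ℂ f c (t • v)‖
      ≤ ‖t‖⁻¹ * (4 * M * (‖t‖ * ‖v‖ / r) ^ 2) := by gcongr
    _ = 4 * M * ‖t‖ * (‖v‖ / r) ^ 2 := by
      have : ‖t‖ ≠ 0 := norm_ne_zero_iff.mpr ht₀
      field_simp

/-- The Cauchy estimate `norm_fderiv_le_of_forall_norm_le` makes the derivatives uniformly
Cauchy. -/
theorem differentiableAt_of_tendstoUniformlyOn_ball [CompleteSpace G] {F : ℕ → E → G}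
    {f : E → G} {c : E} {r : ℝ} (hr : 0 < r) (hF : ∀ n, DifferentiableOn ℂ (F n) (ball c r))
    (hFf : TendstoUniformlyOn F f atTop (ball c r)) : DifferentiableAt ℂ f c := by
  have hsub : ∀ z ∈ ball c (r / 2), ball z (r / 2) ⊆ ball c r := fun z hz =>
    (ball_subset_ball' (by rw [mem_ball] at hz; linarith))
  have hF' : UniformCauchySeqOn (fun n z => fderiv ℂ (F n) z) atTop (ball c (r / 2)) := by
    rw [Metric.uniformCauchySeqOn_iff]
    intro ε hε
    obtain ⟨K, hK⟩ := (Metric.uniformCauchySeqOn_iff.mp hFf.uniformCauchySeqOn)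
      (ε * r / 8) (by positivity)
    refine ⟨K, fun m hm n hn z hz => ?_⟩
    have hd : DifferentiableOn ℂ (F m - F n) (ball z (r / 2)) :=
      ((hF m).sub (hF n)).mono (hsub z hz)
    have hbound := norm_fderiv_le_of_forall_norm_le (half_pos hr) hd
      (fun w hw => by simpa [dist_eq_norm] using (hK m hm n hn w (hsub z hz hw)).le)
    have hat : ∀ k, DifferentiableAt ℂ (F k) z := fun k =>
      (hF k).differentiableAt (isOpen_ball.mem_nhds (hsub z hz (mem_ball_self (half_pos hr))))
    rw [fderiv_sub (hat m) (hat n)] at hbound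
    rw [dist_eq_norm]
    calc _ ≤ 2 * (ε * r / 8) / (r / 2) := hbound
      _ < ε := by field_simp; linarith
  have hlim : TendstoUniformlyOn (fun n z => fderiv ℂ (F n) z)
      (fun z => limUnder atTop fun n => fderiv ℂ (F n) z) atTop (ball c (r / 2)) :=
    hF'.tendstoUniformlyOn_of_tendsto fun z hz => (hF'.cauchySeq hz).tendsto_limUnder
  refine (hasFDerivAt_of_tendstoUniformlyOn isOpen_ball hlim (fun n z hz => ?_)
    (fun z hz => hFf.tendsto_at (ball_subset_ball (by linarith) hz))
    (mem_ball_self (half_pos hr))).differentiableAt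
  exact ((hF n).differentiableAt (isOpen_ball.mem_nhds
    (ball_subset_ball (by linarith) hz))).hasFDerivAt

/-- `fderiv ℂ f · v` is a locally uniform limit of difference quotients, by
`norm_inv_smul_sub_sub_fderiv_le`. -/
theorem Differentiable.differentiable_fderiv_apply [CompleteSpace G] {f : E → G}
    (hf : Differentiable ℂ f) (v : E) : Differentiable ℂ fun z => fderiv ℂ f z v := by
  intro c
  obtain ⟨r, hr, hfr⟩ := Metric.continuousAt_iff.mp hf.continuous.continuousAt 1 one_pos
  set M := ‖f c‖ + 1
  have hM : ∀ w ∈ ball c r, ‖f w‖ ≤ M := fun w hw => by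
    have := hfr (mem_ball.mp hw)
    rw [dist_eq_norm] at this
    linarith [norm_le_norm_add_norm_sub' (f w) (f c)]
  set t : ℕ → ℂ := fun n => ((n : ℂ) + 1)⁻¹
  have ht₀ : ∀ n, t n ≠ 0 := fun n => inv_ne_zero (Nat.cast_add_one_ne_zero n)
  have ht : Tendsto t atTop (𝓝 0) := by
    simpa [t, one_div] using tendsto_one_div_add_atTop_nhds_zero_nat (𝕜 := ℂ)
  refine differentiableAt_of_tendstoUniformlyOn_ball (half_pos hr)
    (F := fun n z => (t n)⁻¹ • (f (z + t n • v) - f z))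
    (fun n => ((hf.comp (differentiable_id.add_const _)).sub hf).const_smul _ |>.differentiableOn)
    ?_
  rw [Metric.tendstoUniformlyOn_iff]
  intro ε hε
  have hsmall : ∀ᶠ n in atTop, ‖t n • v‖ < r / 2 ∧ 4 * M * ‖t n‖ * (‖v‖ / (r / 2)) ^ 2 < ε := by
    have h1 : Tendsto (fun n => ‖t n • v‖) atTop (𝓝 0) := by
      simpa using (ht.smul_const v).norm
    have h2 : Tendsto (fun n => 4 * M * ‖t n‖ * (‖v‖ / (r / 2)) ^ 2) atTop (𝓝 0) := by
      simpa using ((ht.norm.const_mul (4 * M)).mul_const ((‖v‖ / (r / 2)) ^ 2))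
    exact (h1.eventually (gt_mem_nhds (half_pos hr))).and (h2.eventually (gt_mem_nhds hε))
  filter_upwards [hsmall] with n ⟨hn, hnε⟩ z hz
  have hzr : ball z (r / 2) ⊆ ball c r :=
    ball_subset_ball' (by rw [mem_ball] at hz; linarith)
  rw [dist_comm, dist_eq_norm]
  exact (norm_inv_smul_sub_sub_fderiv_le (hf.differentiableOn.mono hzr)
    (fun w hw => hM w (hzr hw)) (ht₀ n) hn).trans_lt hnε

end Holomorphic

section Anyon

open Complex

variable {N : ℕ}

theorem isOpen_setOf_injective {ι X : Type*} [Finite ι] [TopologicalSpace X] [T2Space X] :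
    IsOpen {x : ι → X | Function.Injective x} := by
  simp only [Function.Injective, Set.ofPred_forall]
  refine isOpen_iInter_of_finite fun j => isOpen_iInter_of_finite fun k => ?_
  by_cases hjk : j = k
  · simp [hjk]
  · simpa [hjk] using isOpen_ne_fun (continuous_apply j) (continuous_apply k)

theorem notMem_fatDiag_iff {x : Conf N} : x ∉ fatDiag N ↔ Function.Injective x := by
  simp only [fatDiag, Set.mem_ofPred_eq, Function.Injective]
  grind

theorem zC_injective : Function.Injective zC := by
  intro v w h
  have hre := congrArg re h
  have him := congrArg im h
  simp only [zC, add_re, ofReal_re, mul_re, ofReal_im, I_re, I_im, add_im, mul_im] at hre him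
  ext i; fin_cases i <;> simp <;> linarith

theorem zC_sub (v w : Fin 2 → ℝ) : zC (v - w) = zC v - zC w := by
  simp [zC]; ring

theorem nrm_eq_norm_zC (v : Fin 2 → ℝ) : nrm v = ‖zC v‖ := by
  simp [nrm, zC, norm_def, normSq_apply, pow_two]

def zVec (N : ℕ) : Conf N →L[ℝ] (Fin N → ℂ) :=
  LinearMap.toContinuousLinearMap
    { toFun := fun y j => zC (y j)
      map_add' := fun y y' => by ext j; simp [zC]; ring
      map_smul' := fun a y => by ext j; simp [zC]; ring }

@[simp] theorem zVec_apply (y : Conf N) (j : Fin N) : zVec N y j = zC (y j) := rfl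

theorem injective_zVec {y : Conf N} (hy : Function.Injective y) :
    Function.Injective (zVec N y) :=
  zC_injective.comp hy

def cdir : Fin 2 → ℂ := ![1, I]

theorem zVec_evec (j : Fin N) (i : Fin 2) : zVec N (evec j i) = Pi.single j (cdir i) := by
  ext k
  by_cases hk : k = j
  · subst hk; fin_cases i <;> simp [evec, zC, cdir]
  · simp [evec, zC, hk]

def invDiffSum (j : Fin N) (z : Fin N → ℂ) : ℂ :=
  ∑ k ∈ univ.filter (fun k => k ≠ j), (z j - z k)⁻¹

/-- That is, `A_j = (Im S_j, Re S_j)` for `S_j = invDiffSum j`. -/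
theorem Avec_apply (j : Fin N) (y : Conf N) (i : Fin 2) :
    Avec j y i = (-I * cdir i * invDiffSum j (zVec N y)).re := by
  simp only [Avec, invDiffSum, Finset.sum_apply, mul_sum, re_sum, zVec_apply]
  refine sum_congr rfl fun k _ => ?_
  have hn : nrm (y j - y k) ^ 2 = normSq (zC (y j) - zC (y k)) := by
    rw [nrm_eq_norm_zC, ← normSq_eq_norm_sq]
    simp [zC]; ring_nf
  fin_cases i <;> simp [perp, cdir, hn, inv_re, inv_im, zC, div_eq_inv_mul]

def increasingPairs (N : ℕ) : Finset (Fin N × Fin N) := univ.filter fun p => p.1 < p.2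

def jastrowFactor (β : ℝ) (z : Fin N → ℂ) : ℝ :=
  ∏ p ∈ increasingPairs N, ‖z p.1 - z p.2‖ ^ β

theorem jastrowFactor_zVec (β : ℝ) (y : Conf N) :
    jastrowFactor β (zVec N y)
      = ∏ p ∈ univ.filter (fun p : Fin N × Fin N => p.1 < p.2), nrm (y p.1 - y p.2) ^ β := by
  simp [jastrowFactor, increasingPairs, nrm_eq_norm_zC, zC_sub]

theorem sum_increasingPairs_inv_sub_mul_single (z : Fin N → ℂ) (j : Fin N) (c : ℂ) :
    ∑ p ∈ increasingPairs N,
      (z p.1 - z p.2)⁻¹ * ((Pi.single j c : Fin N → ℂ) p.1 - (Pi.single j c : Fin N → ℂ) p.2)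
      = c * invDiffSum j z := by
  have hsplit : ∀ a b : Fin N, (if a < b then (z a - z b)⁻¹ *
      ((Pi.single j c : Fin N → ℂ) a - (Pi.single j c : Fin N → ℂ) b) else 0)
      = (if a = j then (if j < b then c * (z j - z b)⁻¹ else 0) else 0)
        + (if b = j then (if a < j then c * (z j - z a)⁻¹ else 0) else 0) := by
    intro a b
    by_cases ha : a = j <;> by_cases hb : b = j
    · subst ha hb; simp
    · subst ha; simp [hb, mul_comm]
    · subst hb
      rw [← neg_sub (z a), inv_neg]
      split_ifs <;> simp_all [mul_comm]
    · simp [ha, hb]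
  rw [increasingPairs, sum_filter, Fintype.sum_prod_type]
  simp only [hsplit, sum_add_distrib, sum_ite_irrel, sum_const_zero, sum_ite_eq', mem_univ, if_true]
  rw [invDiffSum, sum_filter, mul_sum, ← sum_add_distrib]
  refine sum_congr rfl fun k _ => ?_
  rcases lt_trichotomy k j with h | rfl | h
  · simp [h, h.ne, h.not_gt]
  · simp
  · simp [h, h.ne', h.not_gt]

theorem hasFDerivAt_log_norm {w : ℂ} (hw : w ≠ 0) :
    HasFDerivAt (fun u : ℂ => Real.log ‖u‖) (reCLM.comp (w⁻¹ • ContinuousLinearMap.id ℝ ℂ)) w := by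
  have h := (((hasFDerivAt_id w).norm_sq).log (by simpa using hw)).const_mul (1 / 2 : ℝ)
  have hfun : (fun u : ℂ => Real.log ‖u‖) = fun u => 1 / 2 * Real.log (‖id u‖ ^ 2) := by
    funext u; rw [id, Real.log_pow]; push_cast; ring
  rw [hfun]
  refine h.congr_fderiv ?_
  ext u
  simp [← normSq_eq_norm_sq]
  ring

def logJastrowFactor (z : Fin N → ℂ) : ℝ :=
  ∑ p ∈ increasingPairs N, Real.log ‖z p.1 - z p.2‖

theorem sub_ne_zero_of_mem_increasingPairs {z : Fin N → ℂ} (hz : Function.Injective z)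
    {p : Fin N × Fin N} (hp : p ∈ increasingPairs N) : z p.1 - z p.2 ≠ 0 :=
  sub_ne_zero.mpr (hz.ne (mem_filter.mp hp).2.ne)

theorem jastrowFactor_eq_exp (β : ℝ) {z : Fin N → ℂ} (hz : Function.Injective z) :
    jastrowFactor β z = Real.exp (β * logJastrowFactor z) := by
  rw [logJastrowFactor, mul_sum, Real.exp_sum, jastrowFactor]
  refine prod_congr rfl fun p hp => ?_
  rw [Real.rpow_def_of_pos (norm_pos_iff.mpr (sub_ne_zero_of_mem_increasingPairs hz hp)),
    mul_comm]

theorem hasFDerivAt_logJastrowFactor {z : Fin N → ℂ} (hz : Function.Injective z) :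
    HasFDerivAt logJastrowFactor (∑ p ∈ increasingPairs N,
      reCLM.comp ((z p.1 - z p.2)⁻¹ • (ContinuousLinearMap.proj (R := ℝ) p.1 -
        ContinuousLinearMap.proj (R := ℝ) (φ := fun _ : Fin N => ℂ) p.2))) z := by
  refine HasFDerivAt.fun_sum fun p hp => ?_
  convert (hasFDerivAt_log_norm (sub_ne_zero_of_mem_increasingPairs hz hp)).comp z
    (ContinuousLinearMap.proj (R := ℝ) (φ := fun _ : Fin N => ℂ) p.1 -
      ContinuousLinearMap.proj p.2).hasFDerivAt using 1 <;> ext <;> simp [mul_sub]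

theorem hasFDerivAt_jastrowFactor (β : ℝ) {z : Fin N → ℂ} (hz : Function.Injective z) :
    HasFDerivAt (jastrowFactor β)
      ((jastrowFactor β z * β) • fderiv ℝ logJastrowFactor z) z := by
  have hexp := ((hasFDerivAt_logJastrowFactor hz).const_mul β).exp
  rw [← jastrowFactor_eq_exp β hz, smul_smul, ← (hasFDerivAt_logJastrowFactor hz).fderiv] at hexp
  refine hexp.congr_of_eventuallyEq ?_
  filter_upwards [isOpen_setOf_injective.mem_nhds hz] with w hw using jastrowFactor_eq_exp β hw

theorem fderiv_jastrowFactor_single (β : ℝ) {z : Fin N → ℂ} (hz : Function.Injective z)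
    (j : Fin N) (c : ℂ) : fderiv ℝ (jastrowFactor β) z (Pi.single j c)
      = jastrowFactor β z * β * (c * invDiffSum j z).re := by
  rw [(hasFDerivAt_jastrowFactor β hz).fderiv, (hasFDerivAt_logJastrowFactor hz).fderiv,
    ← sum_increasingPairs_inv_sub_mul_single z j c, re_sum]
  simp

def jastrow (β : ℝ) (q : (Fin N → ℂ) → ℂ) (y : Conf N) : ℂ :=
  (jastrowFactor β (zVec N y) : ℂ) * q (zVec N y)

def covDeriv (α : ℝ) (j : Fin N) (q : (Fin N → ℂ) → ℂ) (z : Fin N → ℂ) : ℂ :=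
  fderiv ℂ q z (Pi.single j 1) + α * invDiffSum j z * q z

theorem hasFDerivAt_jastrow (β : ℝ) {q : (Fin N → ℂ) → ℂ} {y : Conf N}
    (hy : Function.Injective y) (hq : DifferentiableAt ℂ q (zVec N y)) :
    HasFDerivAt (jastrow β q) (((jastrowFactor β (zVec N y) : ℂ) •
      (fderiv ℂ q (zVec N y)).restrictScalars ℝ + q (zVec N y) •
        ofRealCLM.comp (fderiv ℝ (jastrowFactor β) (zVec N y))).comp (zVec N)) y := by
  have hR := (hasFDerivAt_jastrowFactor β (injective_zVec hy)).differentiableAt.hasFDerivAt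
  exact ((ofRealCLM.hasFDerivAt.comp _ hR).mul (hq.hasFDerivAt.restrictScalars ℝ)).comp y
    (zVec N).hasFDerivAt

theorem pd_jastrow (β : ℝ) {q : (Fin N → ℂ) → ℂ} {y : Conf N}
    (hy : Function.Injective y) (hq : DifferentiableAt ℂ q (zVec N y)) (j : Fin N) (i : Fin 2) :
    pd j i (jastrow β q) y = jastrowFactor β (zVec N y) * (cdir i *
      fderiv ℂ q (zVec N y) (Pi.single j 1)
        + β * (cdir i * invDiffSum j (zVec N y)).re * q (zVec N y)) := by
  have hsingle : (Pi.single j (cdir i) : Fin N → ℂ) = cdir i • Pi.single j 1 := by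
    rw [← Pi.single_smul, smul_eq_mul, mul_one]
  rw [pd, (hasFDerivAt_jastrow β hy hq).fderiv]
  simp only [ContinuousLinearMap.comp_apply, zVec_evec, add_apply,
    smul_apply, ContinuousLinearMap.coe_restrictScalars',
    fderiv_jastrowFactor_single β (injective_zVec hy), ofRealCLM_apply, smul_eq_mul]
  rw [hsingle, map_smul, smul_eq_mul]
  push_cast
  ring

theorem Dop_jastrow (α : ℝ) {q : (Fin N → ℂ) → ℂ} {y : Conf N}
    (hy : Function.Injective y) (hq : DifferentiableAt ℂ q (zVec N y)) (j : Fin N) (i : Fin 2) :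
    Dop α j i (jastrow α q) y = -I * cdir i * jastrow α (covDeriv α j q) y := by
  rw [Dop, pd_jastrow α hy hq, Avec_apply, jastrow, jastrow, covDeriv]
  set w := cdir i * invDiffSum j (zVec N y)
  have hw : w = w.re + w.im * I := (re_add_im w).symm
  have him : (-I * cdir i * invDiffSum j (zVec N y)).re = w.im := by simp [w, mul_assoc]
  rw [him]
  push_cast
  linear_combination (I * jastrowFactor α (zVec N y) * α * q (zVec N y)) * hw
    + (jastrowFactor α (zVec N y) * α * q (zVec N y) * w.im) * I_sq

theorem Dop_congr_of_eventuallyEq {α : ℝ} {j : Fin N} {i : Fin 2} {f f' : Conf N → ℂ} {x : Conf N}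
    (h : f =ᶠ[nhds x] f') : Dop α j i f x = Dop α j i f' x := by
  rw [Dop, Dop, pd, pd, h.fderiv_eq, h.eq_of_nhds]

theorem Dop_const_mul {α : ℝ} {j : Fin N} {i : Fin 2} {f : Conf N → ℂ} {x : Conf N}
    (hf : DifferentiableAt ℝ f x) (a : ℂ) :
    Dop α j i (fun y => a * f y) x = a * Dop α j i f x := by
  simp only [Dop, pd, fderiv_const_mul hf a, smul_apply, smul_eq_mul]
  ring

theorem differentiableAt_covDeriv (α : ℝ) (j : Fin N) {q : (Fin N → ℂ) → ℂ}
    (hq : Differentiable ℂ q) {z : Fin N → ℂ} (hz : Function.Injective z) :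
    DifferentiableAt ℂ (covDeriv α j q) z := by
  have hS : DifferentiableAt ℂ (invDiffSum j) z := by
    unfold invDiffSum
    refine DifferentiableAt.fun_sum fun k hk => ?_
    refine ((differentiableAt_apply j z).sub (differentiableAt_apply k z)).inv ?_
    exact sub_ne_zero.mpr (hz.ne (mem_filter.mp hk).2.symm)
  exact (hq.differentiable_fderiv_apply _ z).add (((differentiableAt_const _).mul hS).mul (hq z))

theorem D2_jastrow (α : ℝ) (j : Fin N) {g : (Fin N → ℂ) → ℂ} (hg : Differentiable ℂ g)
    {x : Conf N} (hx : Function.Injective x) : D2 α j (jastrow α g) x = 0 := by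
  have hK := differentiableAt_covDeriv α j hg (injective_zVec hx)
  have hstep : ∀ i, Dop α j i (fun y => Dop α j i (jastrow α g) y) x
      = (-I * cdir i) ^ 2 * jastrow α (covDeriv α j (covDeriv α j g)) x := by
    intro i
    have hloc : (fun y => Dop α j i (jastrow α g) y)
        =ᶠ[nhds x] fun y => -I * cdir i * jastrow α (covDeriv α j g) y := by
      filter_upwards [isOpen_setOf_injective.mem_nhds hx] with y hy
      exact Dop_jastrow α hy (hg _) j i
    rw [Dop_congr_of_eventuallyEq hloc,
      Dop_const_mul (hasFDerivAt_jastrow α hx hK).differentiableAt, Dop_jastrow α hx hK]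
    ring
  simp [D2, hstep, Fin.sum_univ_two, cdir]

theorem pd_conj (j : Fin N) (i : Fin 2) (f : Conf N → ℂ) (x : Conf N) :
    pd j i (fun y => conj (f y)) x = conj (pd j i f x) := by
  have h := conjCLE.comp_fderiv (f := f) (x := x)
  simp only [Function.comp_def, conjCLE_apply] at h
  rw [pd, pd, h]
  rfl

theorem Dop_neg (α : ℝ) (j : Fin N) (i : Fin 2) (f : Conf N → ℂ) (x : Conf N) :
    Dop α j i (fun y => -f y) x = -Dop α j i f x := by
  simp only [Dop, pd, fderiv_fun_neg, neg_apply]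
  ring

theorem Dop_conj (α : ℝ) (j : Fin N) (i : Fin 2) (f : Conf N → ℂ) (x : Conf N) :
    Dop α j i (fun y => conj (f y)) x = -conj (Dop (-α) j i f x) := by
  simp only [Dop, pd_conj, map_add, map_mul, map_neg, conj_I, conj_ofReal]
  push_cast
  ring

theorem D2_conj (α : ℝ) (j : Fin N) (f : Conf N → ℂ) (x : Conf N) :
    D2 α j (fun y => conj (f y)) x = conj (D2 (-α) j f x) := by
  simp only [D2, Dop_conj, Dop_neg, map_sum, neg_neg]

theorem jastrow_conj (β : ℝ) (q : (Fin N → ℂ) → ℂ) :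
    jastrow β (fun z => conj (q z)) = fun y => conj (jastrow β q y) :=
  funext fun y => by rw [jastrow, jastrow, map_mul, conj_ofReal]

theorem jastrow_eq_prod_nrm (β : ℝ) (q : (Fin N → ℂ) → ℂ) :
    jastrow β q = fun y : Conf N =>
      ((∏ p ∈ univ.filter (fun p : Fin N × Fin N => p.1 < p.2),
        nrm (y p.1 - y p.2) ^ β : ℝ) : ℂ) * q (fun j => zC (y j)) :=
  funext fun y => by rw [jastrow, jastrowFactor_zVec]; rfl

end Anyon

theorem statement1_general (N : ℕ) (α : ℝ)
    (g : (Fin N → ℂ) → ℂ) (hg : Differentiable ℂ g) :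
    ∀ x : Conf N, x ∉ fatDiag N →
      (∑ j, D2 α j (fun y =>
        ((∏ p ∈ univ.filter (fun p : Fin N × Fin N => p.1 < p.2),
            nrm (y p.1 - y p.2) ^ (-α) : ℝ) : ℂ)
          * conj (g (fun j => zC (y j)))) x = 0)
      ∧ (∑ j, D2 α j (fun y =>
        ((∏ p ∈ univ.filter (fun p : Fin N × Fin N => p.1 < p.2),
            nrm (y p.1 - y p.2) ^ α : ℝ) : ℂ)
          * g (fun j => zC (y j))) x = 0) := by
  intro x hx
  have hx' := notMem_fatDiag_iff.mp hx
  refine ⟨?_, ?_⟩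
  · rw [← jastrow_eq_prod_nrm (-α) fun z => conj (g z), jastrow_conj]
    simp [D2_conj, D2_jastrow _ _ hg hx']
  · rw [← jastrow_eq_prod_nrm α]
    simp [D2_jastrow _ _ hg hx']

/-- For `g` holomorphic, `Ψ₊ = ∏_{j<k}|x_j-x_k|^{-α}·conj(g(z))` and
`Ψ₋ = ∏_{j<k}|x_j-x_k|^{α}·g(z)` are generalized zero-energy eigenfunctions of the
`N`-anyon kinetic energy operator away from the fat diagonal. -/
theorem statement1 (N : ℕ) (hN : 1 ≤ N) (α : ℝ)
    (g : (Fin N → ℂ) → ℂ) (hg : Differentiable ℂ g) :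
    ∀ x : Conf N, x ∉ fatDiag N →
      (∑ j, D2 α j (fun y =>
        ((∏ p ∈ univ.filter (fun p : Fin N × Fin N => p.1 < p.2),
            nrm (y p.1 - y p.2) ^ (-α) : ℝ) : ℂ)
          * conj (g (fun j => zC (y j)))) x = 0)
      ∧ (∑ j, D2 α j (fun y =>
        ((∏ p ∈ univ.filter (fun p : Fin N × Fin N => p.1 < p.2),
            nrm (y p.1 - y p.2) ^ α : ℝ) : ℂ)
          * g (fun j => zC (y j))) x = 0) :=
  statement1_general N α g hg
end
end
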